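/- arXiv:2310.17105 — 3 statements merged into one kernel-verified Lean document; each statement's English description precedes it below -/
import Mathlib

section
/- Let K be a compact (in the weak-* topology) set of Borel probability measures on G such that every μ ∈ K satisfies the 'no deterministic images' condition. Then for every sequence μ₁, μ₂, … of measures in K and every Borel probability measure ν on X, the sequence of measures μₙ * μₙ₋₁ * … * μ₁ * ν converges to 𝔪 in the weak-* topology as n → ∞. -/
open MeasureTheory Topology Filter Metric Set

variable {X : Type*} [MetricSpace X] [CompactSpace X]

/-- The group of isometries of `X`, with the sup metric
`d_C(g,h) = sup_{x ∈ X} d (g x) (h x)` (induced from `C(X, X)`). -/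
noncomputable instance : MetricSpace (X ≃ᵢ X) :=
  MetricSpace.induced (fun g => (⟨g, g.continuous⟩ : C(X, X)))
    (fun g h hgh => by
      ext x
      exact DFunLike.congr_fun hgh x)
    inferInstance

noncomputable instance : MeasurableSpace (X ≃ᵢ X) := borel _
instance : BorelSpace (X ≃ᵢ X) := ⟨rfl⟩

/-- The (closed) support of a measure: the set of points all of whose open
neighborhoods have positive measure. -/
def msupp {α : Type*} [TopologicalSpace α] [MeasurableSpace α] (μ : Measure α) : Set α :=
  {x | ∀ U : Set α, IsOpen U → x ∈ U → 0 < μ U}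

/-- `μ` satisfies the *no deterministic images* condition: there is no pair of proper
(nonempty) closed subsets `A, B ⊆ X` with `g '' A = B` for every `g ∈ supp μ`. -/
def NoDetImages (μ : Measure (X ≃ᵢ X)) : Prop :=
  ¬ ∃ A B : Set X, A.Nonempty ∧ B.Nonempty ∧ IsClosed A ∧ IsClosed B ∧
      A ≠ Set.univ ∧ B ≠ Set.univ ∧ ∀ g ∈ msupp μ, g '' A = B

/-- `μ * ν`: the pushforward of `μ ⊗ ν` under the action map `(g, x) ↦ g x`. -/
noncomputable def actConv [MeasurableSpace X] (μ : Measure (X ≃ᵢ X)) (ν : Measure X) :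
    Measure X :=
  (μ.prod ν).map (fun p => p.1 p.2)

/-- `convSeq μ ν n = μₙ * μₙ₋₁ * ⋯ * μ₁ * ν` (with `μ (k-1)` playing the role of `μₖ`). -/
noncomputable def convSeq [MeasurableSpace X] (μ : ℕ → Measure (X ≃ᵢ X)) (ν : Measure X) :
    ℕ → Measure X
  | 0 => ν
  | n + 1 => actConv (μ n) (convSeq μ ν n)


section Aux
open scoped NNReal

lemma dist_apply_le' (g h : X ≃ᵢ X) (x : X) : dist (g x) (h x) ≤ dist g h :=
  ContinuousMap.dist_apply_le_dist (f := (⟨g, g.continuous⟩ : C(X,X))) (g := (⟨h, h.continuous⟩ : C(X,X))) x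

lemma continuous_action : Continuous (fun p : (X ≃ᵢ X) × X => p.1 p.2) := by
  apply (LipschitzWith.of_dist_le_mul (K := 2) (f := fun p : (X ≃ᵢ X) × X => p.1 p.2) ?_).continuous
  rintro ⟨g, x⟩ ⟨h, y⟩
  have h1 : dist (g x) (h x) ≤ dist g h := dist_apply_le' g h x
  have h2 : dist (h x) (h y) = dist x y := h.isometry.dist_eq x y
  have h3 : dist (g x) (h y) ≤ dist (g x) (h x) + dist (h x) (h y) := dist_triangle _ _ _
  have h4 : dist g h ≤ dist (g, x) (h, y) := le_max_left _ _
  have h5 : dist x y ≤ dist (g, x) (h, y) := le_max_right _ _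
  push_cast
  nlinarith [dist_nonneg (x := (g,x)) (y := (h,y))]

lemma measurable_action [MeasurableSpace X] [BorelSpace X] :
    Measurable (fun p : (X ≃ᵢ X) × X => p.1 p.2) :=
  continuous_action.measurable

lemma continuous_eval (x : X) : Continuous (fun g : X ≃ᵢ X => g x) :=
  continuous_action.comp (Continuous.prodMk continuous_id continuous_const)

/-- integrability of bounded continuous functions -/
lemma integrable_bdd {α : Type*} [MeasurableSpace α] [TopologicalSpace α] [OpensMeasurableSpace α]
    (μ : Measure α) [IsFiniteMeasure μ] {w : α → ℝ} (hw : Continuous w) {C : ℝ}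
    (hC : ∀ a, |w a| ≤ C) : Integrable w μ := by
  refine (integrable_const C).mono' hw.aestronglyMeasurable (Eventually.of_forall fun a => ?_)
  simpa [Real.norm_eq_abs] using hC a

/-- the Markov operator -/
noncomputable def Pop [MeasurableSpace X] (lam : Measure (X ≃ᵢ X)) (h : X → ℝ) : X → ℝ :=
  fun x => ∫ g, h (g x) ∂lam

section Pop
variable [MeasurableSpace X] [BorelSpace X]
variable (lam : Measure (X ≃ᵢ X)) [IsProbabilityMeasure lam] {h : X → ℝ} {L : ℝ≥0} {C : ℝ}

lemma integrable_eval (hh : Continuous h) (hC : ∀ x, |h x| ≤ C) (x : X) :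
    Integrable (fun g : X ≃ᵢ X => h (g x)) lam :=
  integrable_bdd lam (hh.comp (continuous_eval x)) (fun g => hC (g x))

lemma Pop_bound (hh : Continuous h) (hC : ∀ x, |h x| ≤ C) (x : X) : |Pop lam h x| ≤ C := by
  have := norm_integral_le_of_norm_le_const (μ := lam) (f := fun g : X ≃ᵢ X => h (g x)) (C := C)
    (Eventually.of_forall fun g => by simpa [Real.norm_eq_abs] using hC (g x))
  simpa [Pop, Real.norm_eq_abs, measure_univ] using this

lemma Pop_lipschitz (hL : LipschitzWith L h) (hC : ∀ x, |h x| ≤ C) :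
    LipschitzWith L (Pop lam h) := by
  apply LipschitzWith.of_dist_le_mul
  intro x y
  have hint1 := integrable_eval lam hL.continuous hC x
  have hint2 := integrable_eval lam hL.continuous hC y
  rw [dist_eq_norm, Pop, Pop, ← integral_sub hint1 hint2]
  calc ‖∫ g : X ≃ᵢ X, (h (g x) - h (g y)) ∂lam‖
      ≤ (L * dist x y) * (lam univ).toReal := by
        apply norm_integral_le_of_norm_le_const
        refine Eventually.of_forall fun g => ?_
        have := hL.dist_le_mul (g x) (g y)
        rw [g.isometry.dist_eq] at this
        simpa [Real.dist_eq, Real.norm_eq_abs] using this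
    _ = L * dist x y := by simp [measure_univ]

lemma Pop_continuous (hL : LipschitzWith L h) (hC : ∀ x, |h x| ≤ C) :
    Continuous (Pop lam h) := (Pop_lipschitz lam hL hC).continuous

end Pop
section Fubini
variable [MeasurableSpace X] [BorelSpace X]

lemma isProbabilityMeasure_actConv (mu : Measure (X ≃ᵢ X)) [IsProbabilityMeasure mu]
    (rho : Measure X) [IsProbabilityMeasure rho] : IsProbabilityMeasure (actConv mu rho) := by
  unfold actConv
  exact Measure.isProbabilityMeasure_map measurable_action.aemeasurable

lemma integrable_prod_action (mu : Measure (X ≃ᵢ X)) [IsProbabilityMeasure mu]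
    (rho : Measure X) [IsProbabilityMeasure rho] {f : X → ℝ} (hf : Continuous f) {C : ℝ}
    (hC : ∀ x, |f x| ≤ C) :
    Integrable (fun p : (X ≃ᵢ X) × X => f (p.1 p.2)) (mu.prod rho) :=
  integrable_bdd _ (hf.comp continuous_action) (fun p => hC _)

lemma integral_actConv (mu : Measure (X ≃ᵢ X)) [IsProbabilityMeasure mu]
    (rho : Measure X) [IsProbabilityMeasure rho] {f : X → ℝ} (hf : Continuous f) {C : ℝ}
    (hC : ∀ x, |f x| ≤ C) :
    ∫ x, f x ∂(actConv mu rho) = ∫ x, Pop mu f x ∂rho := by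
  have h1 : ∫ x, f x ∂(actConv mu rho) = ∫ p : (X ≃ᵢ X) × X, f (p.1 p.2) ∂(mu.prod rho) := by
    unfold actConv
    exact integral_map measurable_action.aemeasurable hf.aestronglyMeasurable
  rw [h1]
  rw [integral_prod _ (integrable_prod_action mu rho hf hC)]
  exact integral_integral_swap (integrable_prod_action mu rho hf hC)

lemma integral_Pop_invariant (m : Measure X) [IsProbabilityMeasure m]
    (hm : ∀ g : X ≃ᵢ X, m.map g = m)
    (lam : Measure (X ≃ᵢ X)) [IsProbabilityMeasure lam] {h : X → ℝ} (hh : Continuous h) {C : ℝ}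
    (hC : ∀ x, |h x| ≤ C) :
    ∫ x, Pop lam h x ∂m = ∫ x, h x ∂m := by
  have hswap : ∫ x, ∫ g, h (g x) ∂lam ∂m = ∫ g, ∫ x, h (g x) ∂m ∂lam := by
    exact (integral_integral_swap (integrable_prod_action lam m hh hC)).symm
  have hfix : ∀ g : X ≃ᵢ X, ∫ x, h (g x) ∂m = ∫ x, h x ∂m := by
    intro g
    have := integral_map (μ := m) (φ := (g : X → X)) g.continuous.measurable.aemeasurable
      (f := h) hh.aestronglyMeasurable
    rw [hm g] at this
    exact this.symm
  unfold Pop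
  rw [hswap]
  simp only [hfix]
  simp [measure_univ]

end Fubini
section Iter
variable [MeasurableSpace X] [BorelSpace X]

noncomputable def popIter (mus : ℕ → Measure (X ≃ᵢ X)) : ℕ → (X → ℝ) → (X → ℝ)
  | 0, h => h
  | n + 1, h => Pop (mus 0) (popIter (fun i => mus (i + 1)) n h)

variable {L : ℝ≥0} {C : ℝ}

lemma popIter_lipschitz (mus : ℕ → Measure (X ≃ᵢ X)) [∀ n, IsProbabilityMeasure (mus n)]
    (n : ℕ) {h : X → ℝ} (hL : LipschitzWith L h) (hC : ∀ x, |h x| ≤ C) :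
    LipschitzWith L (popIter mus n h) ∧ ∀ x, |popIter mus n h x| ≤ C := by
  induction n generalizing mus with
  | zero => exact ⟨hL, hC⟩
  | succ n ih =>
    obtain ⟨l1, b1⟩ := ih (fun i => mus (i + 1))
    exact ⟨Pop_lipschitz _ l1 b1, Pop_bound _ l1.continuous b1⟩

lemma popIter_succ (mus : ℕ → Measure (X ≃ᵢ X)) (n : ℕ) (h : X → ℝ) :
    popIter mus (n + 1) h = popIter mus n (Pop (mus n) h) := by
  induction n generalizing mus h with
  | zero => rfl
  | succ n ih =>
    show Pop (mus 0) (popIter (fun i => mus (i+1)) (n+1) h) = _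
    rw [ih (fun i => mus (i+1)) h]
    rfl

lemma isProbabilityMeasure_convSeq (mus : ℕ → Measure (X ≃ᵢ X)) [∀ n, IsProbabilityMeasure (mus n)]
    (ν : Measure X) [IsProbabilityMeasure ν] (n : ℕ) :
    IsProbabilityMeasure (convSeq mus ν n) := by
  induction n with
  | zero => simpa [convSeq]
  | succ n ih => exact @isProbabilityMeasure_actConv X _ _ _ _ (mus n) _ (convSeq mus ν n) ih

lemma integral_convSeq (mus : ℕ → Measure (X ≃ᵢ X)) [∀ n, IsProbabilityMeasure (mus n)]
    (ν : Measure X) [IsProbabilityMeasure ν] (n : ℕ) {h : X → ℝ}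
    (hL : LipschitzWith L h) (hC : ∀ x, |h x| ≤ C) :
    ∫ x, h x ∂(convSeq mus ν n) = ∫ x, popIter mus n h x ∂ν := by
  induction n generalizing h with
  | zero => rfl
  | succ n ih =>
    haveI := isProbabilityMeasure_convSeq mus ν n
    show ∫ x, h x ∂(actConv (mus n) (convSeq mus ν n)) = _
    rw [integral_actConv (mus n) (convSeq mus ν n) hL.continuous hC]
    rw [ih (Pop_lipschitz (mus n) hL hC) (fun x => Pop_bound (mus n) hL.continuous hC x)]
    rw [← popIter_succ]

lemma integral_popIter_invariant (m : Measure X) [IsProbabilityMeasure m]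
    (hm : ∀ g : X ≃ᵢ X, m.map g = m)
    (mus : ℕ → Measure (X ≃ᵢ X)) [∀ n, IsProbabilityMeasure (mus n)] (n : ℕ) {h : X → ℝ}
    (hL : LipschitzWith L h) (hC : ∀ x, |h x| ≤ C) :
    ∫ x, popIter mus n h x ∂m = ∫ x, h x ∂m := by
  induction n generalizing mus with
  | zero => rfl
  | succ n ih =>
    show ∫ x, Pop (mus 0) (popIter (fun i => mus (i+1)) n h) x ∂m = _
    obtain ⟨l1, b1⟩ := popIter_lipschitz (fun i => mus (i+1)) n hL hC
    rw [integral_Pop_invariant m hm (mus 0) l1.continuous b1]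
    exact ih (fun i => mus (i+1))

end Iter
section Var

noncomputable def Vm [MeasurableSpace X] (m : Measure X) (h : X → ℝ) : ℝ :=
  (∫ x, (h x)^2 ∂m) - (∫ x, h x ∂m)^2

lemma integral_sq_sub {α : Type*} [MeasurableSpace α] (μ : Measure α) [IsProbabilityMeasure μ]
    {F : α → ℝ} (hF : Integrable F μ) (hF2 : Integrable (fun a => (F a)^2) μ) :
    ∫ a, (F a - ∫ b, F b ∂μ)^2 ∂μ = (∫ a, (F a)^2 ∂μ) - (∫ a, F a ∂μ)^2 := by
  set c := ∫ b, F b ∂μ with hc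
  have hfun : (fun a => (F a - c)^2) = fun a => ((F a)^2 - (2*c) * F a) + c^2 := by
    funext a; ring
  have i2 : Integrable (fun a => 2*c*F a) μ := hF.const_mul (2*c)
  have i1 : Integrable (fun a => F a^2 - 2*c*F a) μ := hF2.sub i2
  rw [hfun, integral_add i1 (integrable_const _), integral_sub hF2 i2, MeasureTheory.integral_const_mul,
    integral_const]
  simp only [measure_univ, ENNReal.toReal_one, probReal_univ, smul_eq_mul, one_mul]
  ring

lemma sq_integral_le {α : Type*} [MeasurableSpace α] (μ : Measure α) [IsProbabilityMeasure μ]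
    {F : α → ℝ} (hF : Integrable F μ) (hF2 : Integrable (fun a => (F a)^2) μ) :
    (∫ a, F a ∂μ)^2 ≤ ∫ a, (F a)^2 ∂μ := by
  have h0 : 0 ≤ ∫ a, (F a - ∫ b, F b ∂μ)^2 ∂μ := integral_nonneg fun a => sq_nonneg _
  rw [integral_sq_sub μ hF hF2] at h0
  linarith

variable [MeasurableSpace X] [BorelSpace X]
variable {L : ℝ≥0} {C : ℝ} {h : X → ℝ}

lemma sq_lipschitz (hL : LipschitzWith L h) (hC : ∀ x, |h x| ≤ C) :
    LipschitzWith (2 * C.toNNReal * L) (fun x => (h x)^2) := by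
  apply LipschitzWith.of_dist_le_mul
  intro x y
  have h1 : dist (h x) (h y) ≤ L * dist x y := hL.dist_le_mul x y
  have h2 : |h x| ≤ C := hC x
  have h3 : |h y| ≤ C := hC y
  have h4 : C ≤ (C.toNNReal : ℝ) := Real.le_coe_toNNReal C
  rw [Real.dist_eq] at h1 ⊢
  have e : (h x)^2 - (h y)^2 = (h x - h y) * (h x + h y) := by ring
  rw [e, abs_mul]
  have h5 : |h x + h y| ≤ 2 * (C.toNNReal : ℝ) :=
    (abs_add_le _ _).trans (by linarith)
  push_cast
  nlinarith [abs_nonneg (h x - h y), abs_nonneg (h x + h y), dist_nonneg (x := x) (y := y)]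

lemma sq_bound (hC : ∀ x, |h x| ≤ C) (x : X) : |(h x)^2| ≤ C^2 := by
  have := hC x
  have h0 : (0:ℝ) ≤ |h x| := abs_nonneg _
  rw [abs_of_nonneg (sq_nonneg _)]
  calc (h x)^2 = |h x|^2 := (sq_abs _).symm
    _ ≤ C^2 := by nlinarith

variable (lam : Measure (X ≃ᵢ X)) [IsProbabilityMeasure lam]

lemma Pop_sq_sub_nonneg (hh : Continuous h) (hC : ∀ x, |h x| ≤ C) (x : X) :
    0 ≤ Pop lam (fun y => (h y)^2) x - (Pop lam h x)^2 := by
  have h1 : Integrable (fun g : X ≃ᵢ X => h (g x)) lam := integrable_eval lam hh hC x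
  have h2 : Integrable (fun g : X ≃ᵢ X => (h (g x))^2) lam :=
    integrable_eval lam (by continuity) (C := C^2) (fun y => sq_bound hC y) x
  have := sq_integral_le lam h1 h2
  simp only [Pop]
  linarith

lemma vm_diff (m : Measure X) [IsProbabilityMeasure m] (hm : ∀ g : X ≃ᵢ X, m.map g = m)
    (hL : LipschitzWith L h) (hC : ∀ x, |h x| ≤ C) :
    Vm m h - Vm m (Pop lam h) =
      ∫ x, (Pop lam (fun y => (h y)^2) x - (Pop lam h x)^2) ∂m := by
  have hc2 : Continuous fun y => (h y)^2 := by
    have := hL.continuous; continuity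
  have hPh_l := Pop_lipschitz lam hL hC
  have hPh_b := Pop_bound lam (C := C) hL.continuous hC
  have int1 : Integrable (fun x => Pop lam (fun y => (h y)^2) x) m :=
    integrable_bdd m (Pop_continuous lam (sq_lipschitz hL hC) (fun y => sq_bound hC y))
      (fun x => Pop_bound lam hc2 (fun y => sq_bound hC y) x)
  have int2 : Integrable (fun x => (Pop lam h x)^2) m :=
    integrable_bdd m (by have := (Pop_lipschitz lam hL hC).continuous; continuity)
      (C := C^2) (fun x => sq_bound hPh_b x)
  rw [integral_sub int1 int2]
  rw [integral_Pop_invariant m hm lam hc2 (fun y => sq_bound hC y)]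
  rw [Vm, Vm, integral_Pop_invariant m hm lam hL.continuous hC]
  ring

lemma Vm_Pop_le (m : Measure X) [IsProbabilityMeasure m] (hm : ∀ g : X ≃ᵢ X, m.map g = m)
    (hL : LipschitzWith L h) (hC : ∀ x, |h x| ≤ C) :
    Vm m (Pop lam h) ≤ Vm m h := by
  have := vm_diff lam m hm hL hC
  have h0 : 0 ≤ ∫ x, (Pop lam (fun y => (h y)^2) x - (Pop lam h x)^2) ∂m :=
    integral_nonneg fun x => Pop_sq_sub_nonneg lam hL.continuous hC x
  linarith

end Var
section Supp

lemma eq_zero_on_msupp {α : Type*} [TopologicalSpace α] [MeasurableSpace α]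
    [OpensMeasurableSpace α] (μ : Measure α) [IsFiniteMeasure μ] {w : α → ℝ}
    (hw : Continuous w) (hw0 : ∀ a, 0 ≤ w a) (hint : Integrable w μ)
    (hzero : ∫ a, w a ∂μ = 0) : ∀ a ∈ msupp μ, w a = 0 := by
  intro a ha
  by_contra hne
  have hpos : 0 < w a := lt_of_le_of_ne (hw0 a) (Ne.symm hne)
  set U : Set α := {b | w a / 2 < w b} with hU
  have hUopen : IsOpen U := isOpen_lt continuous_const hw
  have haU : a ∈ U := by simp [hU]; linarith
  have hμU : 0 < μ U := ha U hUopen haU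
  have h1 : ∫ b in U, w b ∂μ ≤ ∫ b, w b ∂μ :=
    setIntegral_le_integral hint (Eventually.of_forall hw0)
  have h2 : (w a / 2) * (μ U).toReal ≤ ∫ b in U, w b ∂μ :=
    setIntegral_ge_of_const_le_real hUopen.measurableSet (measure_ne_top μ U)
      (fun b hb => le_of_lt hb) hint.integrableOn
  have h3 : 0 < (μ U).toReal := ENNReal.toReal_pos (ne_of_gt hμU) (measure_ne_top μ U)
  nlinarith

variable [MeasurableSpace X] [BorelSpace X]

/-- The invariant measure has full support. -/
lemma m_full_support (m : Measure X) [IsProbabilityMeasure m]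
    (hm : ∀ g : X ≃ᵢ X, m.map g = m) (lam0 : Measure (X ≃ᵢ X)) (hnd : NoDetImages lam0) :
    ∀ (x : X) (U : Set X), IsOpen U → x ∈ U → 0 < m U := by
  have hS : ∀ (g : X ≃ᵢ X), g '' msupp m = msupp m := by
    have hsub : ∀ (g : X ≃ᵢ X), ∀ x ∈ msupp m, g x ∈ msupp m := by
      intro g x hx U hUopen hgxU
      have : m U = m (g ⁻¹' U) := by
        conv_lhs => rw [← hm g]
        exact Measure.map_apply g.continuous.measurable hUopen.measurableSet
      rw [this]
      exact hx _ (hUopen.preimage g.continuous) hgxU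
    intro g
    apply Set.Subset.antisymm
    · rintro y ⟨x, hx, rfl⟩; exact hsub g x hx
    · intro y hy
      exact ⟨g.symm y, hsub g.symm y hy, g.apply_symm_apply y⟩
  have hclosed : IsClosed (msupp m) := by
    rw [← isOpen_compl_iff]
    rw [isOpen_iff_forall_mem_open]
    intro x hx
    simp only [msupp, mem_compl_iff, mem_setOf_eq, not_forall] at hx
    obtain ⟨U, hUopen, hxU, hU0⟩ := hx
    have hU0' : m U = 0 := by simpa using hU0
    refine ⟨U, fun y hy => ?_, hUopen, hxU⟩
    simp only [msupp, mem_compl_iff, mem_setOf_eq, not_forall]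
    exact ⟨U, hUopen, hy, by simp [hU0']⟩
  have hne : (msupp m).Nonempty := by
    by_contra hemp
    rw [Set.not_nonempty_iff_eq_empty] at hemp
    have hcov : ∀ x : X, ∃ U : Set X, IsOpen U ∧ x ∈ U ∧ m U = 0 := by
      intro x
      have : x ∉ msupp m := by simp [hemp]
      simp only [msupp, mem_setOf_eq, not_forall] at this
      obtain ⟨U, h1, h2, h3⟩ := this
      exact ⟨U, h1, h2, by simpa using h3⟩
    choose U hUopen hUmem hU0 using hcov
    obtain ⟨t, ht⟩ := isCompact_univ.elim_finite_subcover U hUopen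
      (fun x _ => mem_iUnion.2 ⟨x, hUmem x⟩)
    have : m univ = 0 := by
      refine le_antisymm ?_ zero_le
      calc m univ ≤ m (⋃ i ∈ t, U i) := measure_mono ht
        _ ≤ ∑ i ∈ t, m (U i) := measure_biUnion_finset_le t U
        _ = 0 := by simp [hU0]
    simp [measure_univ] at this
  have huniv : msupp m = univ := by
    by_contra hprop
    exact hnd ⟨msupp m, msupp m, hne, hne, hclosed, hclosed, hprop, hprop,
      fun g _ => hS g⟩
  intro x U hUopen hxU
  have : x ∈ msupp m := huniv ▸ mem_univ x
  exact this U hUopen hxU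

end Supp
section Gap
variable [MeasurableSpace X] [BorelSpace X]

lemma exists_ball_const [Nonempty X] (m : Measure X) [IsProbabilityMeasure m]
    (hfull : ∀ (x : X) (U : Set X), IsOpen U → x ∈ U → 0 < m U) {r : ℝ} (hr : 0 < r) :
    ∃ c > 0, ∀ x : X, c ≤ (m (ball x r)).toReal := by
  obtain ⟨t, htfin, htcov⟩ := (Metric.totallyBounded_iff.mp (isCompact_univ (X := X)).totallyBounded)
    (r/2) (by linarith)
  have htne : (htfin.toFinset).Nonempty := by
    obtain ⟨x⟩ := ‹Nonempty X›
    have := htcov (mem_univ x)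
    simp only [mem_iUnion] at this
    obtain ⟨y, hy, _⟩ := this
    exact ⟨y, htfin.mem_toFinset.2 hy⟩
  refine ⟨(htfin.toFinset).inf' htne (fun y => (m (ball y (r/2))).toReal), ?_, ?_⟩
  · rw [gt_iff_lt, Finset.lt_inf'_iff]
    intro y _
    exact ENNReal.toReal_pos (ne_of_gt (hfull y _ isOpen_ball (mem_ball_self (by linarith))))
      (measure_ne_top m _)
  · intro x
    have := htcov (mem_univ x)
    simp only [mem_iUnion] at this
    obtain ⟨y, hy, hxy⟩ := this
    refine le_trans (Finset.inf'_le _ (htfin.mem_toFinset.2 hy)) ?_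
    apply ENNReal.toReal_mono (measure_ne_top m _)
    apply measure_mono
    intro z hz
    rw [mem_ball] at *
    have := dist_triangle z y x
    rw [dist_comm y x] at this
    linarith

lemma exists_var_gap [Nonempty X] (m : Measure X) [IsProbabilityMeasure m]
    (hfull : ∀ (x : X) (U : Set X), IsOpen U → x ∈ U → 0 < m U) (L : ℝ≥0) {ε C : ℝ}
    (hε : 0 < ε) :
    ∃ γ > 0, ∀ h : X → ℝ, LipschitzWith L h → (∀ x, |h x| ≤ C) → Vm m h < γ →
      ∀ x, |h x - ∫ y, h y ∂m| ≤ ε := by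
  set r : ℝ := ε / (2 * ((L:ℝ) + 1)) with hrdef
  have hL1 : (0:ℝ) < (L:ℝ) + 1 := by positivity
  have hr : 0 < r := by positivity
  obtain ⟨c, hc, hball⟩ := exists_ball_const m hfull hr
  refine ⟨(ε/2)^2 * c, by positivity, ?_⟩
  intro h hL hC hvar x
  by_contra hcon
  push_neg at hcon
  set cm := ∫ y, h y ∂m with hcm
  have hLr : (L:ℝ) * r ≤ ε / 2 := by
    have h1 : ((L:ℝ) + 1) * r = ε / 2 := by
      rw [hrdef]; field_simp
    nlinarith [hr]
  have hkey : ∀ z ∈ ball x r, (ε/2) ≤ |h z - cm| := by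
    intro z hz
    have h1 : |h z - h x| ≤ (L:ℝ) * r := by
      have := hL.dist_le_mul z x
      rw [Real.dist_eq] at this
      have h2 : dist z x < r := mem_ball.mp hz
      nlinarith [NNReal.coe_nonneg L]
    have h2 : |h x - cm| ≤ |h x - h z| + |h z - cm| := abs_sub_le _ _ _
    rw [abs_sub_comm (h x) (h z)] at h2
    linarith
  have hint : Integrable h m := integrable_bdd m hL.continuous hC
  have hint2 : Integrable (fun z => (h z)^2) m :=
    integrable_bdd m (by have := hL.continuous; continuity) (fun z => sq_bound hC z)
  have hint3 : Integrable (fun z => (h z - cm)^2) m := by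
    have : (fun z => (h z - cm)^2) = fun z => ((h z)^2 - (2*cm) * h z) + cm^2 := by
      funext z; ring
    rw [this]
    exact ((hint2.sub (hint.const_mul (2*cm))).add (integrable_const _))
  have hVm : Vm m h = ∫ z, (h z - cm)^2 ∂m := (integral_sq_sub m hint hint2).symm
  have hbd : (ε/2)^2 * (m (ball x r)).toReal ≤ ∫ z in ball x r, (h z - cm)^2 ∂m := by
    apply setIntegral_ge_of_const_le_real isOpen_ball.measurableSet (measure_ne_top m _)
    · intro z hz
      have := hkey z hz
      calc (ε/2)^2 ≤ |h z - cm|^2 := by nlinarith [abs_nonneg (h z - cm)]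
        _ = (h z - cm)^2 := sq_abs _
    · exact hint3.integrableOn
  have hle : ∫ z in ball x r, (h z - cm)^2 ∂m ≤ ∫ z, (h z - cm)^2 ∂m :=
    setIntegral_le_integral hint3 (Eventually.of_forall fun z => sq_nonneg _)
  have : (ε/2)^2 * c ≤ (ε/2)^2 * (m (ball x r)).toReal :=
    mul_le_mul_of_nonneg_left (hball x) (by positivity)
  linarith [hvar, hVm ▸ hvar]
end Gap
section Rigid
variable [MeasurableSpace X] [BorelSpace X]

lemma rigid [Nonempty X] (m : Measure X) [IsProbabilityMeasure m]
    (hm : ∀ g : X ≃ᵢ X, m.map g = m)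
    (hfull : ∀ (x : X) (U : Set X), IsOpen U → x ∈ U → 0 < m U)
    (lamhat : Measure (X ≃ᵢ X)) [IsProbabilityMeasure lamhat] (hnd : NoDetImages lamhat)
    {h : X → ℝ} {L : ℝ≥0} {C : ℝ} (hL : LipschitzWith L h) (hC : ∀ x, |h x| ≤ C)
    (heq : Vm m (Pop lamhat h) = Vm m h) (hnc : ∃ x y : X, h x ≠ h y) : False := by
  obtain ⟨x₁, x₂, hne⟩ := hnc
  have hC0 : 0 ≤ C := (abs_nonneg _).trans (hC x₁)
  -- the defect function W vanishes identically
  have hWcont : Continuous (fun x => Pop lamhat (fun y => (h y)^2) x - (Pop lamhat h x)^2) := by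
    have c1 := Pop_continuous lamhat (sq_lipschitz hL hC) (fun y => sq_bound hC y)
    have c2 := Pop_continuous lamhat hL hC
    continuity
  have hWbd : ∀ x, |Pop lamhat (fun y => (h y)^2) x - (Pop lamhat h x)^2| ≤ C^2 + C^2 := by
    intro x
    have b1 : |Pop lamhat (fun y => (h y)^2) x| ≤ C^2 := by
      have hc2 : Continuous fun y => (h y)^2 := by have := hL.continuous; continuity
      exact Pop_bound lamhat hc2 (fun y => sq_bound hC y) x
    have b2 : |(Pop lamhat h x)^2| ≤ C^2 := sq_bound (fun x => Pop_bound lamhat hL.continuous hC x) x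
    calc |Pop lamhat (fun y => (h y)^2) x - (Pop lamhat h x)^2|
        ≤ |Pop lamhat (fun y => (h y)^2) x| + |(Pop lamhat h x)^2| := abs_sub _ _
      _ ≤ C^2 + C^2 := add_le_add b1 b2
  have hWzero : ∀ x : X,
      Pop lamhat (fun y => (h y)^2) x - (Pop lamhat h x)^2 = 0 := by
    have hint : Integrable (fun x => Pop lamhat (fun y => (h y)^2) x - (Pop lamhat h x)^2) m :=
      integrable_bdd m hWcont hWbd
    have hiz : ∫ x, (Pop lamhat (fun y => (h y)^2) x - (Pop lamhat h x)^2) ∂m = 0 := by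
      rw [← vm_diff lamhat m hm hL hC]; linarith
    intro x
    exact eq_zero_on_msupp m hWcont (fun x => Pop_sq_sub_nonneg lamhat hL.continuous hC x)
      hint hiz x (fun U hU hx => hfull x U hU hx)
  -- pointwise rigidity : h (g x) = Pop lamhat h x on the support
  have hkey : ∀ g ∈ msupp lamhat, ∀ x : X, h (g x) = Pop lamhat h x := by
    intro g hg x
    have hFc : Continuous (fun g : X ≃ᵢ X => h (g x)) := hL.continuous.comp (continuous_eval x)
    have hFint : Integrable (fun g : X ≃ᵢ X => h (g x)) lamhat := integrable_eval lamhat hL.continuous hC x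
    have hF2int : Integrable (fun g : X ≃ᵢ X => (h (g x))^2) lamhat :=
      integrable_eval lamhat (by have := hL.continuous; continuity) (C := C^2)
        (fun y => sq_bound hC y) x
    have hvz : ∫ g' : X ≃ᵢ X, (h (g' x) - Pop lamhat h x)^2 ∂lamhat = 0 := by
      have := integral_sq_sub lamhat hFint hF2int
      have hx0 := hWzero x
      simp only [Pop] at hx0 ⊢
      rw [this]
      linarith
    have hw : ∀ g' ∈ msupp lamhat, (h (g' x) - Pop lamhat h x)^2 = 0 := by
      apply eq_zero_on_msupp lamhat _ (fun g' => sq_nonneg _) _ hvz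
      · have : Continuous (fun g' : X ≃ᵢ X => h (g' x) - Pop lamhat h x) := by continuity
        continuity
      · refine integrable_bdd lamhat (by continuity) (C := (C + C)^2) (fun g' => ?_)
        have b1 := hC (g' x)
        have b2 := Pop_bound lamhat hL.continuous hC x
        rw [abs_of_nonneg (sq_nonneg _)]
        have : |h (g' x) - Pop lamhat h x| ≤ C + C :=
          (abs_sub _ _).trans (add_le_add b1 b2)
        nlinarith [abs_nonneg (h (g' x) - Pop lamhat h x), sq_abs (h (g' x) - Pop lamhat h x)]
    have := hw g hg
    have h2 := sq_eq_zero_iff.mp this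
    linarith
  by_cases hsup : (msupp lamhat).Nonempty
  · obtain ⟨g₀, hg₀⟩ := hsup
    obtain ⟨z, -, hz⟩ := isCompact_univ.exists_isMaxOn univ_nonempty hL.continuous.continuousOn
    set M := h z with hM
    replace hz : ∀ y : X, h y ≤ M := fun y => hz (mem_univ y)
    set A : Set X := {x | h (g₀ x) = M} with hA
    set B : Set X := {y | h y = M} with hB
    have hmem : ∀ g ∈ msupp lamhat, ∀ x : X, x ∈ A ↔ g x ∈ B := by
      intro g hg x
      simp only [hA, hB, mem_setOf_eq]
      rw [hkey g hg x, hkey g₀ hg₀ x]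
    have hy0 : ∃ y₀ : X, h y₀ ≠ M := by
      by_cases h1 : h x₁ = M
      · exact ⟨x₂, fun h2 => hne (h1.trans h2.symm)⟩
      · exact ⟨x₁, h1⟩
    obtain ⟨y₀, hy₀⟩ := hy0
    apply hnd
    refine ⟨A, B, ⟨g₀.symm z, ?_⟩, ⟨z, rfl⟩, ?_, ?_, ?_, ?_, ?_⟩
    · simp only [hA, mem_setOf_eq]
      rw [g₀.apply_symm_apply]
    · exact isClosed_singleton.preimage (hL.continuous.comp g₀.continuous)
    · exact isClosed_singleton.preimage hL.continuous
    · intro hAuniv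
      have : g₀.symm y₀ ∈ A := hAuniv ▸ mem_univ _
      simp only [hA, mem_setOf_eq, g₀.apply_symm_apply] at this
      exact hy₀ this
    · intro hBuniv
      exact hy₀ (hBuniv ▸ mem_univ y₀ : y₀ ∈ B)
    · intro g hg
      ext y
      constructor
      · rintro ⟨x, hx, rfl⟩
        exact (hmem g hg x).1 hx
      · intro hy
        refine ⟨g.symm y, ?_, g.apply_symm_apply y⟩
        apply (hmem g hg (g.symm y)).2
        rwa [g.apply_symm_apply]
  · rw [Set.not_nonempty_iff_eq_empty] at hsup
    apply hnd
    refine ⟨{x₁}, {x₂}, singleton_nonempty _, singleton_nonempty _, isClosed_singleton,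
      isClosed_singleton, ?_, ?_, ?_⟩
    · intro h1
      have : x₂ ∈ ({x₁} : Set X) := h1 ▸ mem_univ _
      exact hne (by rw [mem_singleton_iff.mp this])
    · intro h1
      have : x₁ ∈ ({x₂} : Set X) := h1 ▸ mem_univ _
      exact hne (by rw [mem_singleton_iff.mp this])
    · intro g hg
      rw [hsup] at hg
      exact absurd hg (notMem_empty g)
end Rigid
section Unif
variable {ι : Type*} {F : Filter ι}

def UnifTo (F : Filter ι) (u : ι → X → ℝ) (v : X → ℝ) : Prop :=
  ∀ δ > (0:ℝ), ∀ᶠ n in F, ∀ x, |u n x - v x| ≤ δ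

lemma unifTo_of_pointwise {u : ι → X → ℝ} {v : X → ℝ} (L : ℝ≥0)
    (hu : ∀ n, LipschitzWith L (u n)) (hv : LipschitzWith L v)
    (hpt : ∀ x, Tendsto (fun n => u n x) F (𝓝 (v x))) : UnifTo F u v := by
  intro δ hδ
  have hL1 : (0:ℝ) < (L:ℝ) + 1 := by positivity
  set r : ℝ := δ / (3 * ((L:ℝ) + 1)) with hrdef
  have hr : 0 < r := by positivity
  have hLr : (L:ℝ) * r ≤ δ / 3 := by
    have h1 : ((L:ℝ) + 1) * r = δ / 3 := by rw [hrdef]; field_simp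
    nlinarith
  obtain ⟨t, htfin, htcov⟩ :=
    (Metric.totallyBounded_iff.mp (isCompact_univ (X := X)).totallyBounded) r hr
  have hev : ∀ᶠ n in F, ∀ y ∈ t, |u n y - v y| ≤ δ/3 := by
    rw [eventually_all_finite htfin]
    intro y _
    have := Metric.tendsto_nhds.mp (hpt y) (δ/3) (by positivity)
    filter_upwards [this] with n hn
    rw [Real.dist_eq] at hn
    exact le_of_lt hn
  filter_upwards [hev] with n hn x
  have := htcov (mem_univ x)
  simp only [mem_iUnion] at this
  obtain ⟨y, hy, hxy⟩ := this
  rw [mem_ball] at hxy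
  have d1 : |u n x - u n y| ≤ (L:ℝ) * r := by
    have := (hu n).dist_le_mul x y
    rw [Real.dist_eq] at this
    nlinarith [NNReal.coe_nonneg L]
  have d3 : |v y - v x| ≤ (L:ℝ) * r := by
    have := hv.dist_le_mul y x
    rw [Real.dist_eq] at this
    rw [dist_comm] at this
    nlinarith [NNReal.coe_nonneg L]
  have d2 : |u n y - v y| ≤ δ/3 := hn y hy
  have habc : |u n x - v x| ≤ |u n x - u n y| + |u n y - v y| + |v y - v x| := by
    have t1 : |u n x - v x| ≤ |u n x - u n y| + |u n y - v x| := abs_sub_le _ _ _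
    have t2 : |u n y - v x| ≤ |u n y - v y| + |v y - v x| := abs_sub_le _ _ _
    linarith
  calc |u n x - v x| ≤ |u n x - u n y| + |u n y - v y| + |v y - v x| := habc
    _ ≤ (L:ℝ) * r + δ/3 + (L:ℝ) * r := by linarith
    _ ≤ δ := by linarith

lemma unifTo_sq {u : ι → X → ℝ} {v : X → ℝ} {C : ℝ} (hC0 : 0 ≤ C)
    (hu : ∀ n x, |u n x| ≤ C) (hv : ∀ x, |v x| ≤ C) (h : UnifTo F u v) :
    UnifTo F (fun n x => (u n x)^2) (fun x => (v x)^2) := by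
  intro δ hδ
  filter_upwards [h (δ/(2*C+1)) (by positivity)] with n hn x
  have h1 := hn x
  have h2 := hu n x
  have h3 := hv x
  have e : (u n x)^2 - (v x)^2 = (u n x - v x) * (u n x + v x) := by ring
  rw [e, abs_mul]
  have h4 : |u n x + v x| ≤ 2*C := (abs_add_le _ _).trans (by linarith)
  have h5 : (0:ℝ) ≤ |u n x - v x| := abs_nonneg _
  have h6 : (0:ℝ) < 2*C+1 := by positivity
  have h7 : |u n x - v x| * |u n x + v x| ≤ (δ/(2*C+1)) * (2*C) := by
    apply mul_le_mul h1 h4 (abs_nonneg _) (by positivity)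
  have h8 : (δ/(2*C+1)) * (2*C) ≤ δ := by
    rw [div_mul_eq_mul_div, div_le_iff₀ h6]
    nlinarith
  linarith

lemma unifTo_integral [MeasurableSpace X] [BorelSpace X] (μ : Measure X)
    [IsProbabilityMeasure μ] {u : ι → X → ℝ} {v : X → ℝ}
    (hui : ∀ n, Integrable (u n) μ) (hvi : Integrable v μ) (h : UnifTo F u v) :
    Tendsto (fun n => ∫ x, u n x ∂μ) F (𝓝 (∫ x, v x ∂μ)) := by
  rw [Metric.tendsto_nhds]
  intro δ hδ
  filter_upwards [h (δ/2) (by positivity)] with n hn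
  rw [Real.dist_eq, ← integral_sub (hui n) hvi]
  have := norm_integral_le_of_norm_le_const (μ := μ) (f := fun x => u n x - v x) (C := δ/2)
    (Eventually.of_forall fun x => by simpa [Real.norm_eq_abs] using hn x)
  rw [Real.norm_eq_abs] at this
  simp only [measure_univ, ENNReal.toReal_one, probReal_univ, mul_one] at this
  linarith

end Unif
section Key
variable [MeasurableSpace X] [BorelSpace X]

lemma key_contraction [Nonempty X] (m : Measure X) [IsProbabilityMeasure m]
    (hm : ∀ g : X ≃ᵢ X, m.map g = m)
    (hfull : ∀ (x : X) (U : Set X), IsOpen U → x ∈ U → 0 < m U)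
    (K : Set (ProbabilityMeasure (X ≃ᵢ X))) (hK : IsCompact K)
    (hKnd : ∀ μ ∈ K, NoDetImages (μ : Measure (X ≃ᵢ X)))
    (L : ℝ≥0) {C ε : ℝ} (hC0 : 0 ≤ C) (hε : 0 < ε) :
    ∃ η > 0, ∀ lam ∈ K, ∀ h : X → ℝ, LipschitzWith L h → (∀ x, |h x| ≤ C) →
      Vm m (Pop (lam : Measure (X ≃ᵢ X)) h) ≤ max ε (Vm m h - η) := by
  by_contra hcon
  push_neg at hcon
  have hcon' : ∀ n : ℕ, ∃ lam ∈ K, ∃ h : X → ℝ, LipschitzWith L h ∧ (∀ x, |h x| ≤ C) ∧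
      max ε (Vm m h - 1/(n+1)) < Vm m (Pop (lam : Measure (X ≃ᵢ X)) h) := by
    intro n
    obtain ⟨lam, hlam, h, h1, h2, h3⟩ := hcon (1/(n+1)) (by positivity)
    exact ⟨lam, hlam, h, h1, h2, h3⟩
  choose lam hlamK h hLip hBd hgt using hcon'
  set 𝒰 : Ultrafilter ℕ := Ultrafilter.of atTop with h𝒰def
  have h𝒰 : (𝒰 : Filter ℕ) ≤ atTop := Ultrafilter.of_le _
  -- limit of the measures
  obtain ⟨lamhat, hlamhatK, hlamconv⟩ := hK.ultrafilter_le_nhds (𝒰.map lam)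
    (by rw [Ultrafilter.coe_map, le_principal_iff, mem_map]
        exact univ_mem' fun n => hlamK n)
  have htlam : Tendsto lam (𝒰 : Filter ℕ) (𝓝 lamhat) := by
    rwa [Ultrafilter.coe_map] at hlamconv
  -- pointwise limit of the functions
  have hcomp : ∀ x : X, ∃ y ∈ Icc (-C) C, Tendsto (fun n => h n x) (𝒰 : Filter ℕ) (𝓝 y) := by
    intro x
    obtain ⟨y, hy, hconv⟩ := isCompact_Icc.ultrafilter_le_nhds (𝒰.map (fun n => h n x))
      (by rw [Ultrafilter.coe_map, le_principal_iff, mem_map]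
          refine univ_mem' fun n => ?_
          have := abs_le.mp (hBd n x)
          exact ⟨this.1, this.2⟩)
    rw [Ultrafilter.coe_map] at hconv
    exact ⟨y, hy, hconv⟩
  choose vh hIcc hvt using hcomp
  have hvLip : LipschitzWith L vh := by
    apply LipschitzWith.of_dist_le_mul
    intro x y
    exact le_of_tendsto ((hvt x).dist (hvt y))
      (Eventually.of_forall fun n => (hLip n).dist_le_mul x y)
  have hvBd : ∀ x, |vh x| ≤ C := fun x => abs_le.2 ⟨(hIcc x).1, (hIcc x).2⟩
  have hunif : UnifTo (𝒰 : Filter ℕ) h vh := unifTo_of_pointwise L hLip hvLip hvt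
  -- pointwise convergence of the Markov operator images
  have hPt : ∀ x : X, Tendsto (fun n => Pop (lam n : Measure (X ≃ᵢ X)) (h n) x)
      (𝒰 : Filter ℕ) (𝓝 (Pop (lamhat : Measure (X ≃ᵢ X)) vh x)) := by
    intro x
    rw [Metric.tendsto_nhds]
    intro δ hδ
    have e1 : ∀ᶠ n in (𝒰 : Filter ℕ), ∀ z, |h n z - vh z| ≤ δ/3 := hunif (δ/3) (by positivity)
    set Fx : BoundedContinuousFunction (X ≃ᵢ X) ℝ :=
      BoundedContinuousFunction.ofNormedAddCommGroup (fun g => vh (g x))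
        (hvLip.continuous.comp (continuous_eval x)) C
        (fun g => by simpa [Real.norm_eq_abs] using hvBd (g x)) with hFxdef
    have hFx : ∀ g : X ≃ᵢ X, Fx g = vh (g x) := fun g => rfl
    have e2 : Tendsto (fun n => ∫ g, Fx g ∂(lam n : Measure (X ≃ᵢ X))) (𝒰 : Filter ℕ)
        (𝓝 (∫ g, Fx g ∂(lamhat : Measure (X ≃ᵢ X)))) :=
      ProbabilityMeasure.tendsto_iff_forall_integral_tendsto.mp htlam Fx
    have e2' := Metric.tendsto_nhds.mp e2 (δ/2) (by positivity)
    filter_upwards [e1, e2'] with n hn1 hn2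
    have hPv : Pop (lam n : Measure (X ≃ᵢ X)) vh x = ∫ g, Fx g ∂(lam n : Measure (X ≃ᵢ X)) := rfl
    have hPvhat : Pop (lamhat : Measure (X ≃ᵢ X)) vh x
        = ∫ g, Fx g ∂(lamhat : Measure (X ≃ᵢ X)) := rfl
    have d1 : |Pop (lam n : Measure (X ≃ᵢ X)) (h n) x - Pop (lam n : Measure (X ≃ᵢ X)) vh x|
        ≤ δ/3 := by
      rw [Pop, Pop, ← integral_sub (integrable_eval _ (hLip n).continuous (hBd n) x)
        (integrable_eval _ hvLip.continuous hvBd x)]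
      have := norm_integral_le_of_norm_le_const (μ := (lam n : Measure (X ≃ᵢ X)))
        (f := fun g : X ≃ᵢ X => h n (g x) - vh (g x)) (C := δ/3)
        (Eventually.of_forall fun g => by simpa [Real.norm_eq_abs] using hn1 (g x))
      rw [Real.norm_eq_abs] at this
      simpa [measure_univ] using this
    rw [Real.dist_eq] at hn2 ⊢
    rw [hPv] at d1
    calc |Pop (lam n : Measure (X ≃ᵢ X)) (h n) x - Pop (lamhat : Measure (X ≃ᵢ X)) vh x|
        ≤ |Pop (lam n : Measure (X ≃ᵢ X)) (h n) x - ∫ g, Fx g ∂(lam n : Measure (X ≃ᵢ X))|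
          + |(∫ g, Fx g ∂(lam n : Measure (X ≃ᵢ X))) - ∫ g, Fx g ∂(lamhat : Measure (X ≃ᵢ X))|
          := by rw [hPvhat]; exact abs_sub_le _ _ _
      _ < δ/3 + δ/2 := by exact add_lt_add_of_le_of_lt d1 hn2
      _ ≤ δ := by linarith
  -- uniform convergence of the Markov operator images
  have hPunif : UnifTo (𝒰 : Filter ℕ)
      (fun n => Pop (lam n : Measure (X ≃ᵢ X)) (h n)) (Pop (lamhat : Measure (X ≃ᵢ X)) vh) :=
    unifTo_of_pointwise L (fun n => Pop_lipschitz _ (hLip n) (hBd n))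
      (Pop_lipschitz _ hvLip hvBd) hPt
  -- convergence of the variances
  have hint : ∀ (w : X → ℝ) (C' : ℝ), Continuous w → (∀ x, |w x| ≤ C') → Integrable w m :=
    fun w C' hw hb => integrable_bdd m hw hb
  have TV1 : Tendsto (fun n => Vm m (h n)) (𝒰 : Filter ℕ) (𝓝 (Vm m vh)) := by
    simp only [Vm]
    apply Tendsto.sub
    · exact unifTo_integral m (fun n => hint _ (C^2) (by have := (hLip n).continuous; continuity)
        (fun x => sq_bound (hBd n) x))
        (hint _ (C^2) (by have := hvLip.continuous; continuity) (fun x => sq_bound hvBd x))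
        (unifTo_sq hC0 hBd hvBd hunif)
    · exact Tendsto.pow (unifTo_integral m (fun n => hint _ C (hLip n).continuous (hBd n))
        (hint _ C hvLip.continuous hvBd) hunif) 2
  have TV2 : Tendsto (fun n => Vm m (Pop (lam n : Measure (X ≃ᵢ X)) (h n))) (𝒰 : Filter ℕ)
      (𝓝 (Vm m (Pop (lamhat : Measure (X ≃ᵢ X)) vh))) := by
    have hb : ∀ n x, |Pop (lam n : Measure (X ≃ᵢ X)) (h n) x| ≤ C :=
      fun n x => Pop_bound _ (hLip n).continuous (hBd n) x
    have hbh : ∀ x, |Pop (lamhat : Measure (X ≃ᵢ X)) vh x| ≤ C :=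
      fun x => Pop_bound _ hvLip.continuous hvBd x
    have hc : ∀ n, Continuous (Pop (lam n : Measure (X ≃ᵢ X)) (h n)) :=
      fun n => Pop_continuous _ (hLip n) (hBd n)
    have hch : Continuous (Pop (lamhat : Measure (X ≃ᵢ X)) vh) :=
      Pop_continuous _ hvLip hvBd
    simp only [Vm]
    apply Tendsto.sub
    · exact unifTo_integral m (fun n => hint _ (C^2) (by have := hc n; continuity)
        (fun x => sq_bound (hb n) x))
        (hint _ (C^2) (by have := hch; continuity) (fun x => sq_bound hbh x))
        (unifTo_sq hC0 hb hbh hPunif)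
    · exact Tendsto.pow (unifTo_integral m (fun n => hint _ C (hc n) (hb n))
        (hint _ C hch hbh) hPunif) 2
  -- pass the inequalities to the limit
  have A1 : ε ≤ Vm m (Pop (lamhat : Measure (X ≃ᵢ X)) vh) :=
    ge_of_tendsto TV2 (Eventually.of_forall fun n =>
      le_of_lt (lt_of_le_of_lt (le_max_left _ _) (hgt n)))
  have A2 : Vm m vh ≤ Vm m (Pop (lamhat : Measure (X ≃ᵢ X)) vh) := by
    have T3 : Tendsto (fun n : ℕ => Vm m (h n) - 1/(n+1)) (𝒰 : Filter ℕ) (𝓝 (Vm m vh - 0)) :=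
      TV1.sub (Tendsto.mono_left tendsto_one_div_add_atTop_nhds_zero_nat h𝒰)
    rw [sub_zero] at T3
    exact le_of_tendsto_of_tendsto' T3 TV2 fun n =>
      le_of_lt (lt_of_le_of_lt (le_max_right _ _) (hgt n))
  have A3 : Vm m (Pop (lamhat : Measure (X ≃ᵢ X)) vh) ≤ Vm m vh :=
    Vm_Pop_le _ m hm hvLip hvBd
  have heq : Vm m (Pop (lamhat : Measure (X ≃ᵢ X)) vh) = Vm m vh := le_antisymm A3 A2
  have hnc : ∃ x y : X, vh x ≠ vh y := by
    by_contra hcc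
    push_neg at hcc
    obtain ⟨x₀⟩ := ‹Nonempty X›
    have hvconst : vh = fun _ => vh x₀ := funext fun y => hcc y x₀
    have : Vm m vh = 0 := by
      rw [hvconst]
      simp [Vm, integral_const, measure_univ]
    rw [heq, this] at A1
    linarith
  exact rigid m hm hfull (lamhat : Measure (X ≃ᵢ X)) (hKnd lamhat hlamhatK) hvLip hvBd heq hnc

end Key
section Approx

lemma lipschitz_approx (f : BoundedContinuousFunction X ℝ) {ε : ℝ} (hε : 0 < ε) :
    ∃ (L : ℝ≥0) (f' : X → ℝ), LipschitzWith L f' ∧ (∀ x, |f' x| ≤ ‖f‖) ∧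
      ∀ x, |f x - f' x| ≤ ε := by
  cases isEmpty_or_nonempty X with
  | inl hempty =>
    exact ⟨1, fun x => 0, LipschitzWith.of_dist_le_mul (fun x => (hempty.false x).elim),
      fun x => (hempty.false x).elim, fun x => (hempty.false x).elim⟩
  | inr hne =>
  have huc : UniformContinuous f := CompactSpace.uniformContinuous_of_continuous f.continuous
  obtain ⟨δ, hδ, hucd⟩ := Metric.uniformContinuous_iff.mp huc ε hε
  set Lr : ℝ := 2*‖f‖/δ + 1 with hLrdef
  have hnf : (0:ℝ) ≤ ‖f‖ := norm_nonneg f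
  have hLr0 : 0 ≤ Lr := by positivity
  set f' : X → ℝ := fun x => ⨅ y : X, (f y + Lr * dist x y) with hf'def
  have hfb : ∀ y : X, |f y| ≤ ‖f‖ := fun y => by
    simpa [Real.norm_eq_abs] using f.norm_coe_le_norm y
  have hbdd : ∀ x : X, BddBelow (Set.range fun y => f y + Lr * dist x y) := by
    intro x
    refine ⟨-‖f‖, ?_⟩
    rintro z ⟨y, rfl⟩
    show -‖f‖ ≤ f y + Lr * dist x y
    have h1 := (abs_le.mp (hfb y)).1
    have h2 : 0 ≤ Lr * dist x y := by positivity
    linarith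
  have hlow : ∀ x : X, -‖f‖ ≤ f' x := by
    intro x
    apply le_ciInf
    intro y
    show -‖f‖ ≤ f y + Lr * dist x y
    have h1 := (abs_le.mp (hfb y)).1
    have h2 : 0 ≤ Lr * dist x y := by positivity
    linarith
  have hle : ∀ x, f' x ≤ f x := by
    intro x
    have := ciInf_le (hbdd x) x
    simpa using this
  have hge : ∀ x, f x - ε ≤ f' x := by
    intro x
    apply le_ciInf
    intro y
    show f x - ε ≤ f y + Lr * dist x y
    by_cases hd : dist x y < δ
    · have h1 : dist (f x) (f y) < ε := hucd hd
      rw [Real.dist_eq] at h1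
      have h2 := (abs_lt.mp h1).2
      have h3 : 0 ≤ Lr * dist x y := by positivity
      linarith
    · push_neg at hd
      have h1 : Lr * δ ≤ Lr * dist x y := mul_le_mul_of_nonneg_left hd hLr0
      have h2 : Lr * δ = 2*‖f‖ + δ := by
        rw [hLrdef]; field_simp
      have h3 := (abs_le.mp (hfb y)).1
      have h4 := (abs_le.mp (hfb x)).2
      linarith
  have hkey : ∀ x z : X, f' x ≤ f' z + Lr * dist x z := by
    intro x z
    have h1 : ∀ y : X, f' x - Lr * dist x z ≤ f y + Lr * dist z y := by
      intro y
      have c1 : f' x ≤ f y + Lr * dist x y := ciInf_le (hbdd x) y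
      have c2 : dist x y ≤ dist x z + dist z y := dist_triangle x z y
      have c3 : Lr * dist x y ≤ Lr * (dist x z + dist z y) := mul_le_mul_of_nonneg_left c2 hLr0
      have c4 : Lr * (dist x z + dist z y) = Lr * dist x z + Lr * dist z y := by ring
      linarith
    have h2 : f' x - Lr * dist x z ≤ f' z := le_ciInf fun y => h1 y
    linarith
  have hLip : LipschitzWith Lr.toNNReal f' := by
    apply LipschitzWith.of_dist_le_mul
    intro x z
    rw [Real.dist_eq, Real.coe_toNNReal _ hLr0]
    rw [abs_sub_le_iff]
    constructor
    · have := hkey x z; linarith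
    · have := hkey z x; rw [dist_comm z x] at this; linarith
  refine ⟨Lr.toNNReal, f', hLip, ?_, ?_⟩
  · intro x
    rw [abs_le]
    exact ⟨hlow x, (hle x).trans (abs_le.mp (hfb x)).2⟩
  · intro x
    rw [abs_of_nonneg (by linarith [hle x])]
    linarith [hge x]

end Approx

section IterBound
variable [MeasurableSpace X] [BorelSpace X]

lemma popIter_vm_bound (m : Measure X) [IsProbabilityMeasure m]
    (K : Set (ProbabilityMeasure (X ≃ᵢ X))) (L : ℝ≥0) {C ε η : ℝ} (hη : 0 < η)
    (hkey : ∀ lam ∈ K, ∀ h : X → ℝ, LipschitzWith L h → (∀ x, |h x| ≤ C) →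
      Vm m (Pop (lam : Measure (X ≃ᵢ X)) h) ≤ max ε (Vm m h - η))
    (mus : ℕ → ProbabilityMeasure (X ≃ᵢ X)) (hmus : ∀ i, mus i ∈ K) (n : ℕ)
    {h : X → ℝ} (hL : LipschitzWith L h) (hC : ∀ x, |h x| ≤ C) :
    Vm m (popIter (fun i => (mus i : Measure (X ≃ᵢ X))) n h) ≤ max ε (Vm m h - n * η) := by
  induction n generalizing mus with
  | zero =>
    simp only [popIter, Nat.cast_zero, zero_mul, sub_zero]
    exact le_max_right _ _
  | succ n ih =>
    push_cast
    show Vm m (Pop ((mus 0 : Measure (X ≃ᵢ X)))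
      (popIter (fun i => ((mus (i+1) : Measure (X ≃ᵢ X)))) n h)) ≤ max ε (Vm m h - ((n:ℝ)+1) * η)
    obtain ⟨l1, b1⟩ := popIter_lipschitz (fun i => ((mus (i+1) : Measure (X ≃ᵢ X)))) n hL hC
    have step := hkey (mus 0) (hmus 0) _ l1 b1
    have inner := ih (fun i => mus (i+1)) (fun i => hmus (i+1))
    have bound : Vm m (popIter (fun i => ((mus (i+1) : Measure (X ≃ᵢ X)))) n h) - η
        ≤ max ε (Vm m h - ((n:ℝ)+1) * η) := by
      rcases max_cases ε (Vm m h - n * η) with ⟨he, _⟩ | ⟨he, _⟩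
      · rw [he] at inner
        exact le_trans (by linarith) (le_max_left _ _)
      · rw [he] at inner
        refine le_trans (by linarith : _ ≤ Vm m h - ((n:ℝ)+1) * η) (le_max_right _ _)
    exact le_trans step (max_le (le_max_left _ _) bound)

end IterBound
theorem main_weak_conv' [MeasurableSpace X] [BorelSpace X]
    (m : Measure X) [IsProbabilityMeasure m] (hm : ∀ g : X ≃ᵢ X, m.map g = m)
    (K : Set (ProbabilityMeasure (X ≃ᵢ X))) (hK : IsCompact K)
    (hKnd : ∀ μ ∈ K, NoDetImages (μ : Measure (X ≃ᵢ X)))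
    (μs : ℕ → ProbabilityMeasure (X ≃ᵢ X)) (hμs : ∀ n, μs n ∈ K)
    (ν : Measure X) [IsProbabilityMeasure ν] :
    ∀ f : BoundedContinuousFunction X ℝ,
      Tendsto (fun n => ∫ x, f x ∂(convSeq (fun k => (μs k : Measure (X ≃ᵢ X))) ν n))
        atTop (𝓝 (∫ x, f x ∂m)) := by
  intro f
  have hX : Nonempty X := by
    by_contra hempty
    rw [not_nonempty_iff] at hempty
    have h1 : m univ = 0 := by rw [Set.univ_eq_empty_iff.mpr hempty]; exact measure_empty
    rw [measure_univ] at h1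
    exact one_ne_zero h1
  have hfull := m_full_support m hm (μs 0 : Measure (X ≃ᵢ X)) (hKnd (μs 0) (hμs 0))
  set musM : ℕ → Measure (X ≃ᵢ X) := fun k => (μs k : Measure (X ≃ᵢ X)) with hmusM
  haveI hPmus : ∀ n, IsProbabilityMeasure (musM n) := fun n => (μs n).prop
  haveI hPconv : ∀ n, IsProbabilityMeasure (convSeq musM ν n) :=
    fun n => isProbabilityMeasure_convSeq musM ν n
  have hfb : ∀ x : X, |f x| ≤ ‖f‖ := fun x => by
    simpa [Real.norm_eq_abs] using f.norm_coe_le_norm x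
  have hC0 : (0:ℝ) ≤ ‖f‖ := norm_nonneg f
  rw [Metric.tendsto_nhds]
  intro ε hε
  obtain ⟨L, f', hf'Lip, hf'Bd, hf'close⟩ := lipschitz_approx f (ε := ε/4) (by positivity)
  obtain ⟨γ, hγ, hgap⟩ := exists_var_gap m hfull L (ε := ε/4) (C := ‖f‖) (by positivity)
  obtain ⟨η, hη, hkey⟩ := key_contraction m hm hfull K hK hKnd L hC0 (ε := γ/2)
    (by positivity)
  obtain ⟨N, hN⟩ := exists_nat_ge (Vm m f' / η)
  rw [eventually_atTop]
  refine ⟨N, fun n hn => ?_⟩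
  -- variance of the iterate is small
  have hvm : Vm m (popIter musM n f') < γ := by
    have h1 : Vm m (popIter musM n f') ≤ max (γ/2) (Vm m f' - n * η) :=
      popIter_vm_bound m K L hη hkey μs hμs n hf'Lip hf'Bd
    have h2 : Vm m f' - n * η ≤ γ/2 := by
      have h3 : Vm m f' ≤ N * η := by
        rw [div_le_iff₀ hη] at hN
        linarith
      have h4 : (N:ℝ) * η ≤ n * η := by
        apply mul_le_mul_of_nonneg_right _ (le_of_lt hη)
        exact_mod_cast hn
      linarith
    have := max_le (by linarith : γ/2 ≤ γ/2) h2
    calc Vm m (popIter musM n f') ≤ γ/2 := le_trans h1 this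
      _ < γ := by linarith
  obtain ⟨lI, bI⟩ := popIter_lipschitz musM n hf'Lip hf'Bd
  have hosc : ∀ x : X, |popIter musM n f' x - ∫ y, f' y ∂m| ≤ ε/4 := by
    have := hgap (popIter musM n f') lI bI hvm
    intro x
    have h1 := this x
    rwa [integral_popIter_invariant m hm musM n hf'Lip hf'Bd] at h1
  -- assemble the estimate
  have hint_f : Integrable (⇑f) (convSeq musM ν n) := integrable_bdd _ f.continuous hfb
  have hint_f' : Integrable f' (convSeq musM ν n) := integrable_bdd _ hf'Lip.continuous hf'Bd
  have hint_fm : Integrable (⇑f) m := integrable_bdd _ f.continuous hfb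
  have hint_f'm : Integrable f' m := integrable_bdd _ hf'Lip.continuous hf'Bd
  have t1 : |∫ x, f x ∂(convSeq musM ν n) - ∫ x, f' x ∂(convSeq musM ν n)| ≤ ε/4 := by
    rw [← integral_sub hint_f hint_f']
    have := norm_integral_le_of_norm_le_const (μ := convSeq musM ν n)
      (f := fun x => f x - f' x) (C := ε/4)
      (Eventually.of_forall fun x => by simpa [Real.norm_eq_abs] using hf'close x)
    rw [Real.norm_eq_abs] at this
    simpa [measure_univ] using this
  have t3 : |∫ x, f' x ∂m - ∫ x, f x ∂m| ≤ ε/4 := by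
    rw [← integral_sub hint_f'm hint_fm]
    have := norm_integral_le_of_norm_le_const (μ := m)
      (f := fun x => f' x - f x) (C := ε/4)
      (Eventually.of_forall fun x => by
        rw [Real.norm_eq_abs, abs_sub_comm]; exact hf'close x)
    rw [Real.norm_eq_abs] at this
    simpa [measure_univ] using this
  have t2 : |∫ x, f' x ∂(convSeq musM ν n) - ∫ x, f' x ∂m| ≤ ε/4 := by
    rw [integral_convSeq musM ν n hf'Lip hf'Bd]
    have hconst : ∫ (_ : X), (∫ y, f' y ∂m) ∂ν = ∫ y, f' y ∂m := by
      rw [integral_const]; simp [measure_univ]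
    rw [← hconst]
    have hint1 : Integrable (fun x => popIter musM n f' x) ν := integrable_bdd _ lI.continuous bI
    rw [← integral_sub hint1 (integrable_const _)]
    have := norm_integral_le_of_norm_le_const (μ := ν)
      (f := fun x => popIter musM n f' x - ∫ y, f' y ∂m) (C := ε/4)
      (Eventually.of_forall fun x => by simpa [Real.norm_eq_abs] using hosc x)
    rw [Real.norm_eq_abs] at this
    simpa [measure_univ] using this
  rw [Real.dist_eq]
  have q1 : |∫ x, f x ∂(convSeq musM ν n) - ∫ x, f x ∂m|
      ≤ |∫ x, f x ∂(convSeq musM ν n) - ∫ x, f' x ∂(convSeq musM ν n)|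
        + |∫ x, f' x ∂(convSeq musM ν n) - ∫ x, f' x ∂m|
        + |∫ x, f' x ∂m - ∫ x, f x ∂m| := by
    have a1 : |∫ x, f x ∂(convSeq musM ν n) - ∫ x, f x ∂m|
        ≤ |∫ x, f x ∂(convSeq musM ν n) - ∫ x, f' x ∂m| + |∫ x, f' x ∂m - ∫ x, f x ∂m| :=
      abs_sub_le _ _ _
    have a2 : |∫ x, f x ∂(convSeq musM ν n) - ∫ x, f' x ∂m|
        ≤ |∫ x, f x ∂(convSeq musM ν n) - ∫ x, f' x ∂(convSeq musM ν n)|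
          + |∫ x, f' x ∂(convSeq musM ν n) - ∫ x, f' x ∂m| := abs_sub_le _ _ _
    linarith
  calc |∫ x, f x ∂(convSeq musM ν n) - ∫ x, f x ∂m| ≤ _ := q1
    _ ≤ ε/4 + ε/4 + ε/4 := by linarith
    _ < ε := by linarith

end Aux

/-- **Theorem (main weak-* convergence).** If `K` is a weak-* compact set of Borel
probability measures on the isometry group of `X`, each satisfying the
no-deterministic-images condition, then for any sequence `μ₁, μ₂, …` in `K` and any Borel
probability measure `ν` on `X`, the convolutions `μₙ * ⋯ * μ₁ * ν` converge to the
isometry-invariant measure `𝔪` in the weak-* topology. -/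
theorem main_weak_conv [MeasurableSpace X] [BorelSpace X]
    (m : Measure X) [IsProbabilityMeasure m] (hm : ∀ g : X ≃ᵢ X, m.map g = m)
    (K : Set (ProbabilityMeasure (X ≃ᵢ X))) (hK : IsCompact K)
    (hKnd : ∀ μ ∈ K, NoDetImages (μ : Measure (X ≃ᵢ X)))
    (μs : ℕ → ProbabilityMeasure (X ≃ᵢ X)) (hμs : ∀ n, μs n ∈ K)
    (ν : Measure X) [IsProbabilityMeasure ν] :
    ∀ f : BoundedContinuousFunction X ℝ,
      Tendsto (fun n => ∫ x, f x ∂(convSeq (fun k => (μs k : Measure (X ≃ᵢ X))) ν n))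
        atTop (𝓝 (∫ x, f x ∂m)) := by
  exact fun f => main_weak_conv' m hm K hK hKnd μs hμs ν f
end

section
/- Let K be a compact (in the weak-* topology) set of Borel probability measures on G such that every μ ∈ K satisfies the 'no deterministic images' condition. Then for every ε > 0 there exist m ∈ ℕ and δ > 0 such that for every sequence μ₁, μ₂, …, μ_m of measures in K, every Borel probability measure ν on X, and every ε-wide Borel set Q ⊆ X, one has [μ_m * μ_{m−1} * … * μ₁ * ν](Q) ≥ δ. -/
open MeasureTheory Topology Filter Metric Set

variable {X : Type*} [MetricSpace X] [CompactSpace X]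

/-- A Borel set `Q` is *ε-wide* if it is contained in a ball of radius `ε` and contains a
ball of radius `ε/3`. -/
def EpsWide (ε : ℝ) (Q : Set X) : Prop :=
  (∃ x : X, Q ⊆ Metric.ball x ε) ∧ ∃ y : X, Metric.ball y (ε / 3) ⊆ Q

/- ======================= auxiliary development ======================= -/

open TopologicalSpace
open scoped ENNReal NNReal

namespace ConvAux

noncomputable def toCM (g : X ≃ᵢ X) : C(X, X) := ⟨g, g.continuous⟩

lemma isometry_toCM : Isometry (toCM (X := X)) := Isometry.of_dist_eq fun _ _ => rfl

lemma dist_apply_le (g h : X ≃ᵢ X) (x : X) : dist (g x) (h x) ≤ dist g h :=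
  ContinuousMap.dist_apply_le_dist (f := toCM g) (g := toCM h) x

lemma dist_le'' {g h : X ≃ᵢ X} {C : ℝ} (h0 : 0 ≤ C) (H : ∀ x, dist (g x) (h x) ≤ C) :
    dist g h ≤ C := (ContinuousMap.dist_le (f := toCM g) (g := toCM h) h0).mpr H

lemma continuous_act : Continuous fun p : (X ≃ᵢ X) × X => p.1 p.2 := by
  have : (fun p : (X ≃ᵢ X) × X => p.1 p.2)
      = (fun q : C(X, X) × X => q.1 q.2) ∘ (fun p => (toCM p.1, p.2)) := rfl
  rw [this]
  exact ContinuousEval.continuous_eval.comp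
    ((isometry_toCM.continuous.comp continuous_fst).prodMk continuous_snd)

instance : SecondCountableTopology (X ≃ᵢ X) :=
  isometry_toCM.isEmbedding.secondCountableTopology

lemma measurable_act [MeasurableSpace X] [BorelSpace X] :
    Measurable fun p : (X ≃ᵢ X) × X => p.1 p.2 :=
  continuous_act.measurable

lemma exists_finite_ball_cover (η : ℝ) (hη : 0 < η) :
    ∃ T : Set (X ≃ᵢ X), T.Finite ∧ (univ : Set (X ≃ᵢ X)) ⊆ ⋃ g ∈ T, ball g η := by
  obtain ⟨D, hDfin, hDcov⟩ := (Metric.totallyBounded_iff.mp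
    (isCompact_univ (X := X)).totallyBounded) (η/8) (by linarith)
  have hmem : ∀ x : X, ∃ d ∈ D, dist x d < η/8 := by
    intro x
    have := hDcov (mem_univ x)
    simpa using this
  classical
  let q : X → X := fun x => (hmem x).choose
  have hqD : ∀ x, q x ∈ D := fun x => (hmem x).choose_spec.1
  have hqd : ∀ x, dist x (q x) < η/8 := fun x => (hmem x).choose_spec.2
  haveI : Finite D := hDfin
  let Φ : (X ≃ᵢ X) → (D → D) := fun g d => ⟨q (g d.1), hqD _⟩
  have hrange : (Set.range Φ).Finite := Set.Finite.subset Set.finite_univ (subset_univ _)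
  let gsel : (D → D) → (X ≃ᵢ X) := fun φ =>
    if h : φ ∈ Set.range Φ then h.choose else IsometryEquiv.refl X
  refine ⟨gsel '' Set.range Φ, hrange.image _, ?_⟩
  intro g _
  have hφ : Φ g ∈ Set.range Φ := ⟨g, rfl⟩
  have hsel : Φ (gsel (Φ g)) = Φ g := by
    simp only [gsel, dif_pos hφ]
    exact hφ.choose_spec
  refine mem_biUnion ⟨Φ g, hφ, rfl⟩ ?_
  rw [mem_ball]
  have hd : dist g (gsel (Φ g)) ≤ η/2 := by
    apply dist_le'' (by linarith)
    intro x
    set h := gsel (Φ g) with hh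
    obtain ⟨d, hdD, hdx⟩ := hmem x
    have e1 : dist (g x) (g d) = dist x d := g.isometry.dist_eq x d
    have e2 : dist (h d) (h x) = dist d x := h.isometry.dist_eq d x
    have eq : q (g d) = q (h d) := by
      have h1 := congrFun hsel ⟨d, hdD⟩
      have h2 := congrArg Subtype.val h1
      exact h2.symm
    have c1 : dist (g x) (h x) ≤ dist (g x) (g d) + dist (g d) (h d) + dist (h d) (h x) :=
      dist_triangle4 _ _ _ _
    have c2 : dist (g d) (h d) ≤ dist (g d) (q (g d)) + dist (q (h d)) (h d) := by
      rw [eq]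
      exact dist_triangle _ _ _
    have c3 : dist (q (h d)) (h d) < η/8 := by rw [dist_comm]; exact hqd (h d)
    rw [e1, e2] at c1
    nlinarith [hqd (g d), dist_comm d x ▸ hdx, hdx]
  linarith

lemma msupp_exists_of_pos {α : Type*} [TopologicalSpace α] [MeasurableSpace α]
    [SecondCountableTopology α] (μ : Measure α) {U : Set α}
    (hU : IsOpen U) (hpos : μ U ≠ 0) : ∃ x ∈ U, x ∈ msupp μ := by
  by_contra h
  push_neg at h
  have hV : ∀ x : U, ∃ V : Set α, IsOpen V ∧ (x : α) ∈ V ∧ μ V = 0 := by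
    intro ⟨x, hx⟩
    have hx' := h x hx
    simp only [msupp, mem_setOf_eq, not_forall] at hx'
    obtain ⟨V, hVo, hxV, hVpos⟩ := hx'
    exact ⟨V, hVo, hxV, le_antisymm (not_lt.mp hVpos) (by positivity)⟩
  choose V hVo hxV hV0 using hV
  obtain ⟨T, hTc, hTeq⟩ := TopologicalSpace.isOpen_iUnion_countable V hVo
  have hUsub : U ⊆ ⋃ i ∈ T, V i := by
    intro x hx
    rw [hTeq]
    exact mem_iUnion.mpr ⟨⟨x, hx⟩, hxV _⟩
  have : μ U = 0 := measure_mono_null hUsub ((measure_biUnion_null_iff hTc).mpr fun i _ => hV0 i)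
  exact hpos this

lemma msupp_nonempty {α : Type*} [TopologicalSpace α] [MeasurableSpace α]
    [SecondCountableTopology α] (μ : Measure α) [IsProbabilityMeasure μ] :
    ∃ x, x ∈ msupp μ := by
  obtain ⟨x, _, hx⟩ := msupp_exists_of_pos μ isOpen_univ (by simp)
  exact ⟨x, hx⟩

lemma eventually_lt_measure_open {α : Type*} [MeasurableSpace α] [PseudoEMetricSpace α]
    [OpensMeasurableSpace α] {U : Set α} (hU : IsOpen U)
    {μ : ProbabilityMeasure α} {c : ℝ≥0∞} (hc : c < (μ : Measure α) U) :
    ∀ᶠ μ' : ProbabilityMeasure α in 𝓝 μ, c < (μ' : Measure α) U := by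
  by_contra h
  rw [Filter.not_eventually] at h
  have h' : ∃ᶠ μ' : ProbabilityMeasure α in 𝓝 μ, (μ' : Measure α) U ≤ c :=
    h.mono fun μ' h => not_lt.mp h
  rw [Filter.frequently_iff_neBot] at h'
  set L := 𝓝 μ ⊓ 𝓟 {μ' : ProbabilityMeasure α | (μ' : Measure α) U ≤ c}
  haveI : L.NeBot := h'
  have htend : Tendsto (id : ProbabilityMeasure α → ProbabilityMeasure α) L (𝓝 μ) :=
    tendsto_id.mono_left inf_le_left
  have hlim := MeasureTheory.ProbabilityMeasure.le_liminf_measure_open_of_tendsto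
    (μs := id) (L := L) htend hU
  have hle : L.liminf (fun μ' : ProbabilityMeasure α => (μ' : Measure α) U) ≤ c := by
    apply Filter.liminf_le_of_frequently_le'
    apply Filter.Eventually.frequently
    exact eventually_inf_principal.mpr (Eventually.of_forall fun μ' hμ' => hμ')
  exact absurd (hc.trans_le (hlim.trans hle)) (lt_irrefl _)

lemma hED {s t : Set X} (hs : s.Nonempty) (ht : t.Nonempty) :
    EMetric.hausdorffEdist s t ≠ ⊤ :=
  hausdorffEdist_ne_top_of_nonempty_of_bounded hs ht
    ((isCompact_univ (X := X)).isBounded.subset (subset_univ _))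
    ((isCompact_univ (X := X)).isBounded.subset (subset_univ _))

lemma kset_closed (r : ℝ) (hr : 0 < r) :
    IsClosed {A : NonemptyCompacts X | ∃ y, r ≤ infDist y (A : Set X)} := by
  rcases isEmpty_or_nonempty X with hX | hX
  · haveI : IsEmpty (NonemptyCompacts X) := by
      constructor; intro A
      obtain ⟨a, _⟩ := A.nonempty
      exact hX.false a
    exact isClosed_discrete _
  · rw [← isOpen_compl_iff, isOpen_iff_forall_mem_open]
    intro A hA
    simp only [mem_compl_iff, mem_setOf_eq, not_exists, not_le] at hA
    obtain ⟨y₀, -, hy₀⟩ := (isCompact_univ (X := X)).exists_isMaxOn univ_nonempty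
      (continuous_infDist_pt (A : Set X)).continuousOn
    set m := infDist y₀ (A : Set X) with hm_def
    have hm : m < r := hA y₀
    refine ⟨ball A ((r - m)/2), ?_, isOpen_ball, mem_ball_self (by linarith)⟩
    intro B hB
    simp only [mem_compl_iff, mem_setOf_eq, not_exists, not_le]
    intro y
    have h1 : infDist y (B : Set X) ≤ infDist y (A : Set X)
        + hausdorffDist (A : Set X) (B : Set X) :=
      infDist_le_infDist_add_hausdorffDist (hED A.nonempty B.nonempty)
    have h2 : infDist y (A : Set X) ≤ m := hy₀ (mem_univ y)
    have h3 : hausdorffDist (A : Set X) (B : Set X) < (r - m)/2 := by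
      rw [hausdorffDist_comm, ← NonemptyCompacts.dist_eq]
      exact mem_ball.mp hB
    linarith

lemma hd_move {g g' : X ≃ᵢ X} {s : Set X} :
    hausdorffDist ((g : X → X) '' s) ((g' : X → X) '' s) ≤ dist g g' := by
  apply hausdorffDist_le_of_infDist dist_nonneg
  · rintro x ⟨a, ha, rfl⟩
    exact (infDist_le_dist_of_mem (mem_image_of_mem _ ha)).trans (dist_apply_le g g' a)
  · rintro x ⟨a, ha, rfl⟩
    refine (infDist_le_dist_of_mem (mem_image_of_mem _ ha)).trans ?_
    rw [dist_comm g g']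
    exact dist_apply_le g' g a

lemma far_point {g h : X ≃ᵢ X} {A : Set X} {δ : ℝ} (hδ : 0 < δ)
    (hd : δ ≤ hausdorffDist ((g : X → X) '' A) ((h : X → X) '' A)) :
    (∃ a ∈ A, δ/2 ≤ infDist (g a) ((h : X → X) '' A)) ∨
      (∃ a ∈ A, δ/2 ≤ infDist (h a) ((g : X → X) '' A)) := by
  by_contra hcon
  push_neg at hcon
  obtain ⟨h1, h2⟩ := hcon
  have : hausdorffDist ((g : X → X) '' A) ((h : X → X) '' A) ≤ δ/2 := by
    apply hausdorffDist_le_of_infDist (by linarith)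
    · rintro x ⟨a, ha, rfl⟩
      exact (h1 a ha).le
    · rintro x ⟨a, ha, rfl⟩
      exact (h2 a ha).le
  linarith

lemma sep_card_bound {u : ℝ} {T : Set X} (hT : T.Finite)
    (hcov : (univ : Set X) ⊆ ⋃ c ∈ T, ball c u) (F : Finset X)
    (hsep : ∀ p ∈ F, ∀ q ∈ F, p ≠ q → 2*u ≤ dist p q) : F.card ≤ hT.toFinset.card := by
  classical
  have hch : ∀ p : X, ∃ c ∈ hT.toFinset, p ∈ ball c u := by
    intro p
    have := hcov (mem_univ p)
    simp only [mem_iUnion, exists_prop] at this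
    obtain ⟨c, hc, hpc⟩ := this
    exact ⟨c, hT.mem_toFinset.mpr hc, hpc⟩
  choose φ hφT hφb using hch
  apply Finset.card_le_card_of_injOn φ (fun p _ => hφT p)
  intro p hp q hq hpq
  by_contra hne
  have h1 : dist p (φ p) < u := mem_ball.mp (hφb p)
  have h2 : dist q (φ q) < u := mem_ball.mp (hφb q)
  rw [hpq] at h1
  have h3 := hsep p (by simpa using hp) q (by simpa using hq) hne
  have h4 : dist p q ≤ dist p (φ q) + dist (φ q) q := dist_triangle _ _ _
  rw [dist_comm (φ q) q] at h4
  linarith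

lemma pigeonhole_measure {α ι : Type*} [MeasurableSpace α] (μ : Measure α)
    [IsProbabilityMeasure μ] (T : Finset ι) (f : ι → Set α)
    (hcov : (univ : Set α) ⊆ ⋃ i ∈ T, f i) :
    ∃ i ∈ T, ((T.card : ℝ≥0∞) + 1)⁻¹ ≤ μ (f i) := by
  by_contra hcon
  push_neg at hcon
  have h2 : μ univ ≤ ∑ i ∈ T, μ (f i) :=
    (measure_mono hcov).trans (measure_biUnion_finset_le T f)
  have h3 : ∑ i ∈ T, μ (f i) ≤ T.card • ((T.card : ℝ≥0∞) + 1)⁻¹ :=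
    Finset.sum_le_card_nsmul T _ _ fun i hi => (hcon i hi).le
  rw [nsmul_eq_mul] at h3
  have h4 : (1 : ℝ≥0∞) ≤ (T.card : ℝ≥0∞) * ((T.card : ℝ≥0∞) + 1)⁻¹ := by
    have h4' := h2.trans h3
    rwa [measure_univ] at h4'
  have hn0 : ((T.card : ℝ≥0∞) + 1) ≠ 0 := by simp
  have hnt : ((T.card : ℝ≥0∞) + 1) ≠ ⊤ := by
    simp [ENNReal.add_ne_top, ENNReal.natCast_ne_top]
  have h5 : ((T.card : ℝ≥0∞) + 1) * 1 ≤ ((T.card : ℝ≥0∞) + 1)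
      * ((T.card : ℝ≥0∞) * ((T.card : ℝ≥0∞) + 1)⁻¹) := mul_le_mul_right h4 _
  rw [mul_one, mul_comm ((T.card : ℝ≥0∞)) _, ← mul_assoc,
    ENNReal.mul_inv_cancel hn0 hnt, one_mul] at h5
  have h6 : (T.card : ℝ≥0∞) < (T.card : ℝ≥0∞) + 1 :=
    ENNReal.lt_add_right (ENNReal.natCast_ne_top _) one_ne_zero
  exact absurd h5 (not_le.mpr h6)

end ConvAux

section Chunk6
open TopologicalSpace
open scoped ENNReal NNReal

namespace ConvAux

variable {X : Type*} [MetricSpace X] [CompactSpace X]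

lemma exists_ne_image {μ : Measure (X ≃ᵢ X)} (hnd : NoDetImages μ)
    (hsupp : ∃ g : X ≃ᵢ X, g ∈ msupp μ) {A : Set X} (hA : A.Nonempty) (hAc : IsCompact A)
    (hAu : A ≠ univ) :
    ∃ g h : X ≃ᵢ X, g ∈ msupp μ ∧ h ∈ msupp μ ∧ ⇑g '' A ≠ ⇑h '' A := by
  by_contra hcon
  push_neg at hcon
  obtain ⟨g₀, hg₀⟩ := hsupp
  apply hnd
  refine ⟨A, ⇑g₀ '' A, hA, hA.image _, hAc.isClosed,
    (hAc.image g₀.continuous).isClosed, hAu, ?_, ?_⟩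
  · intro hBu
    apply hAu
    have h1 : ⇑g₀.symm '' (⇑g₀ '' A) = A := by
      rw [← image_comp]
      ext x
      simp
    rw [← h1, hBu, image_univ, g₀.symm.surjective.range_eq]
  · intro g hg
    exact hcon g g₀ hg hg₀

/-- Frequently-visits helper for cluster points of sequences. -/
lemma cluster_frequently {Y : Type*} [TopologicalSpace Y] {u : ℕ → Y} {y : Y}
    (hcl : ClusterPt y (Filter.map u atTop)) {U : Set Y} (hU : U ∈ 𝓝 y) (N : ℕ) :
    ∃ n, N ≤ n ∧ u n ∈ U := by
  have hm : MapClusterPt y atTop u := mapClusterPt_def.mpr hcl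
  have hfreq := (mapClusterPt_iff_frequently.mp hm) U hU
  obtain ⟨n, hn, hnU⟩ := Filter.frequently_atTop.mp hfreq N
  exact ⟨n, hn, hnU⟩

lemma lemA (K : Set (ProbabilityMeasure (X ≃ᵢ X))) (hK : IsCompact K)
    (hKnd : ∀ μ ∈ K, NoDetImages (μ : Measure (X ≃ᵢ X))) {r : ℝ} (hr : 0 < r) :
    ∃ δ₀ : ℝ, 0 < δ₀ ∧ ∀ μ' ∈ K, ∀ A : NonemptyCompacts X,
      (∃ y, r ≤ infDist y (A : Set X)) →
      ∃ g h : X ≃ᵢ X, g ∈ msupp (μ' : Measure (X ≃ᵢ X)) ∧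
        h ∈ msupp (μ' : Measure (X ≃ᵢ X)) ∧
        δ₀ ≤ hausdorffDist (⇑g '' (A : Set X)) (⇑h '' (A : Set X)) := by
  by_contra hcon
  push_neg at hcon
  have hsel : ∀ n : ℕ, ∃ p : ProbabilityMeasure (X ≃ᵢ X) × NonemptyCompacts X,
      p.1 ∈ K ∧ (∃ y, r ≤ infDist y (p.2 : Set X)) ∧
      ∀ g h : X ≃ᵢ X, g ∈ msupp (p.1 : Measure (X ≃ᵢ X)) →
        h ∈ msupp (p.1 : Measure (X ≃ᵢ X)) →
        hausdorffDist (⇑g '' (p.2 : Set X)) (⇑h '' (p.2 : Set X)) < 1/(n+1 : ℝ) := by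
    intro n
    obtain ⟨μ', hμ'K, A, hAcond, hctr⟩ := hcon (1/(n+1 : ℝ)) (by positivity)
    exact ⟨(μ', A), hμ'K, hAcond, fun g h hg hh => hctr g h hg hh⟩
  choose p hpK hpy hpctr using hsel
  set 𝒦 : Set (NonemptyCompacts X) := {A | ∃ y, r ≤ infDist y (A : Set X)} with h𝒦
  have h𝒦cpt : IsCompact 𝒦 := (kset_closed r hr).isCompact
  have hS : IsCompact (K ×ˢ 𝒦) := hK.prod h𝒦cpt
  have hle : Filter.map p atTop ≤ 𝓟 (K ×ˢ 𝒦) := by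
    rw [Filter.le_principal_iff, Filter.mem_map]
    exact Filter.Eventually.of_forall fun n => ⟨hpK n, hpy n⟩
  obtain ⟨q, hqS, hqcl⟩ := hS.exists_clusterPt hle
  obtain ⟨μ, A⟩ := q
  have hμK : μ ∈ K := hqS.1
  have hA𝒦 : ∃ y, r ≤ infDist y (A : Set X) := hqS.2
  -- A is proper
  have hAu : (A : Set X) ≠ univ := by
    obtain ⟨y, hy⟩ := hA𝒦
    intro hu
    have : y ∈ (A : Set X) := hu ▸ mem_univ y
    rw [infDist_zero_of_mem this] at hy
    linarith
  haveI : IsProbabilityMeasure (μ : Measure (X ≃ᵢ X)) := μ.prop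
  obtain ⟨g₀, h₀, hg₀, hh₀, hne⟩ := exists_ne_image (hKnd μ hμK)
    (msupp_nonempty (μ : Measure (X ≃ᵢ X))) A.nonempty A.isCompact hAu
  set c := hausdorffDist (⇑g₀ '' (A : Set X)) (⇑h₀ '' (A : Set X)) with hc_def
  have hcpos : 0 < c := by
    rcases lt_or_eq_of_le (hausdorffDist_nonneg :
      0 ≤ hausdorffDist (⇑g₀ '' (A : Set X)) (⇑h₀ '' (A : Set X))) with h | h
    · exact h
    · exfalso
      apply hne
      apply (IsClosed.hausdorffDist_zero_iff_eq
        ((A.isCompact.image g₀.continuous).isClosed)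
        ((A.isCompact.image h₀.continuous).isClosed)
        (hED (A.nonempty.image _) (A.nonempty.image _))).mp h.symm
  -- the eventual set around (μ, A)
  have hU : {q : ProbabilityMeasure (X ≃ᵢ X) × NonemptyCompacts X |
      (0 < (q.1 : Measure (X ≃ᵢ X)) (ball g₀ (c/8)) ∧
        0 < (q.1 : Measure (X ≃ᵢ X)) (ball h₀ (c/8))) ∧
      dist q.2 A < c/8} ∈ 𝓝 (μ, A) := by
    rw [nhds_prod_eq]
    have e1 : ∀ᶠ μ' : ProbabilityMeasure (X ≃ᵢ X) in 𝓝 μ,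
        0 < (μ' : Measure (X ≃ᵢ X)) (ball g₀ (c/8)) :=
      eventually_lt_measure_open isOpen_ball (hg₀ _ isOpen_ball (mem_ball_self (by positivity)))
    have e2 : ∀ᶠ μ' : ProbabilityMeasure (X ≃ᵢ X) in 𝓝 μ,
        0 < (μ' : Measure (X ≃ᵢ X)) (ball h₀ (c/8)) :=
      eventually_lt_measure_open isOpen_ball (hh₀ _ isOpen_ball (mem_ball_self (by positivity)))
    have e3 : ∀ᶠ B : NonemptyCompacts X in 𝓝 A, dist B A < c/8 := by
      have : ball A (c/8) ∈ 𝓝 A := Metric.ball_mem_nhds A (by positivity)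
      exact Filter.eventually_iff_exists_mem.mpr ⟨_, this, fun B hB => mem_ball.mp hB⟩
    exact Filter.prod_mem_prod (e1.and e2) e3
  -- pick a large n in the cluster
  obtain ⟨N, hN⟩ := exists_nat_gt (2/c)
  obtain ⟨n, hnN, hnU⟩ := cluster_frequently hqcl hU N
  obtain ⟨⟨hmg, hmh⟩, hdA⟩ := hnU
  -- support points of the n-th measure near g₀, h₀
  obtain ⟨g', hg'ball, hg'supp⟩ := msupp_exists_of_pos ((p n).1 : Measure (X ≃ᵢ X))
    isOpen_ball hmg.ne'
  obtain ⟨h', hh'ball, hh'supp⟩ := msupp_exists_of_pos ((p n).1 : Measure (X ≃ᵢ X))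
    isOpen_ball hmh.ne'
  have hmid := hpctr n g' h' hg'supp hh'supp
  -- transfer the Hausdorff distance
  set An : Set X := ((p n).2 : Set X) with hAn
  have hAnne : An.Nonempty := (p n).2.nonempty
  have hAne : (A : Set X).Nonempty := A.nonempty
  have hdAn : hausdorffDist An (A : Set X) < c/8 := by
    rw [← NonemptyCompacts.dist_eq]
    exact hdA
  have htri : c ≤ hausdorffDist (⇑g₀ '' (A : Set X)) (⇑g₀ '' An)
      + hausdorffDist (⇑g₀ '' An) (⇑g' '' An)
      + hausdorffDist (⇑g' '' An) (⇑h' '' An)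
      + hausdorffDist (⇑h' '' An) (⇑h₀ '' An)
      + hausdorffDist (⇑h₀ '' An) (⇑h₀ '' (A : Set X)) := by
    rw [hc_def]
    calc hausdorffDist (⇑g₀ '' (A : Set X)) (⇑h₀ '' (A : Set X))
        ≤ hausdorffDist (⇑g₀ '' (A : Set X)) (⇑g₀ '' An)
          + hausdorffDist (⇑g₀ '' An) (⇑h₀ '' (A : Set X)) :=
          hausdorffDist_triangle (hED (hAne.image _) (hAnne.image _))
      _ ≤ hausdorffDist (⇑g₀ '' (A : Set X)) (⇑g₀ '' An)
          + (hausdorffDist (⇑g₀ '' An) (⇑g' '' An)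
            + hausdorffDist (⇑g' '' An) (⇑h₀ '' (A : Set X))) := by
          have := hausdorffDist_triangle (s := ⇑g₀ '' An) (t := ⇑g' '' An)
            (u := ⇑h₀ '' (A : Set X)) (hED (hAnne.image _) (hAnne.image _))
          linarith
      _ ≤ hausdorffDist (⇑g₀ '' (A : Set X)) (⇑g₀ '' An)
          + (hausdorffDist (⇑g₀ '' An) (⇑g' '' An)
            + (hausdorffDist (⇑g' '' An) (⇑h' '' An)
              + hausdorffDist (⇑h' '' An) (⇑h₀ '' (A : Set X)))) := by
          have := hausdorffDist_triangle (s := ⇑g' '' An) (t := ⇑h' '' An)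
            (u := ⇑h₀ '' (A : Set X)) (hED (hAnne.image _) (hAnne.image _))
          linarith
      _ ≤ hausdorffDist (⇑g₀ '' (A : Set X)) (⇑g₀ '' An)
          + (hausdorffDist (⇑g₀ '' An) (⇑g' '' An)
            + (hausdorffDist (⇑g' '' An) (⇑h' '' An)
              + (hausdorffDist (⇑h' '' An) (⇑h₀ '' An)
                + hausdorffDist (⇑h₀ '' An) (⇑h₀ '' (A : Set X))))) := by
          have := hausdorffDist_triangle (s := ⇑h' '' An) (t := ⇑h₀ '' An)
            (u := ⇑h₀ '' (A : Set X)) (hED (hAnne.image _) (hAnne.image _))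
          linarith
      _ = _ := by ring
  have t1 : hausdorffDist (⇑g₀ '' (A : Set X)) (⇑g₀ '' An) < c/8 := by
    rw [hausdorffDist_image g₀.isometry, hausdorffDist_comm]
    exact hdAn
  have t5 : hausdorffDist (⇑h₀ '' An) (⇑h₀ '' (A : Set X)) < c/8 := by
    rw [hausdorffDist_image h₀.isometry]
    exact hdAn
  have t2 : hausdorffDist (⇑g₀ '' An) (⇑g' '' An) < c/8 :=
    lt_of_le_of_lt hd_move (by rw [dist_comm]; exact mem_ball.mp hg'ball)
  have t4 : hausdorffDist (⇑h' '' An) (⇑h₀ '' An) < c/8 :=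
    lt_of_le_of_lt hd_move (mem_ball.mp hh'ball)
  -- numeric conclusion
  have hsmall : 1/(n+1 : ℝ) < c/2 := by
    have hcast : (N : ℝ) ≤ n := Nat.cast_le.mpr hnN
    have h1 : (2/c : ℝ) < n + 1 := by linarith
    have h2 : 2 < ((n : ℝ)+1) * c := by
      have := (div_lt_iff₀ hcpos).mp h1
      linarith
    rw [div_lt_div_iff₀ (by positivity) (by norm_num)]
    nlinarith
  linarith [htri, t1, t2, t4, t5, hmid, hsmall]

end ConvAux
end Chunk6

section Chunk7
open TopologicalSpace
open scoped ENNReal NNReal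

namespace ConvAux

variable {X : Type*} [MetricSpace X] [CompactSpace X]

lemma lemB (K : Set (ProbabilityMeasure (X ≃ᵢ X))) (hK : IsCompact K)
    {r σ δ₀ : ℝ} (hr : 0 < r) (hσ : 0 < σ) (hδ₀ : 0 < δ₀)
    (hspread : ∀ μ' ∈ K, ∀ A : NonemptyCompacts X,
      (∃ y, r ≤ infDist y (A : Set X)) →
      ∃ g h : X ≃ᵢ X, g ∈ msupp (μ' : Measure (X ≃ᵢ X)) ∧
        h ∈ msupp (μ' : Measure (X ≃ᵢ X)) ∧
        δ₀ ≤ hausdorffDist (⇑g '' (A : Set X)) (⇑h '' (A : Set X))) :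
    ∃ β : ℝ≥0∞, 0 < β ∧ ∀ μ' ∈ K, ∀ A : NonemptyCompacts X,
      (∃ y, r ≤ infDist y (A : Set X)) →
      ∃ g h : X ≃ᵢ X, β ≤ (μ' : Measure (X ≃ᵢ X)) (ball g σ) ∧
        β ≤ (μ' : Measure (X ≃ᵢ X)) (ball h σ) ∧
        δ₀/2 ≤ hausdorffDist (⇑g '' (A : Set X)) (⇑h '' (A : Set X)) := by
  by_contra hcon
  push_neg at hcon
  have hsel : ∀ n : ℕ, ∃ p : ProbabilityMeasure (X ≃ᵢ X) × NonemptyCompacts X,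
      p.1 ∈ K ∧ (∃ y, r ≤ infDist y (p.2 : Set X)) ∧
      ∀ g h : X ≃ᵢ X, ((n : ℝ≥0∞)+1)⁻¹ ≤ (p.1 : Measure (X ≃ᵢ X)) (ball g σ) →
        ((n : ℝ≥0∞)+1)⁻¹ ≤ (p.1 : Measure (X ≃ᵢ X)) (ball h σ) →
        hausdorffDist (⇑g '' (p.2 : Set X)) (⇑h '' (p.2 : Set X)) < δ₀/2 := by
    intro n
    obtain ⟨μ', hK', A, hcond, hctr⟩ := hcon (((n : ℝ≥0∞)+1)⁻¹)
      (ENNReal.inv_pos.mpr (by simp))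
    exact ⟨(μ', A), hK', hcond, hctr⟩
  choose p hpK hpy hpctr using hsel
  set 𝒦 : Set (NonemptyCompacts X) := {A | ∃ y, r ≤ infDist y (A : Set X)} with h𝒦
  have h𝒦cpt : IsCompact 𝒦 := (kset_closed r hr).isCompact
  have hS : IsCompact (K ×ˢ 𝒦) := hK.prod h𝒦cpt
  have hle : Filter.map p atTop ≤ 𝓟 (K ×ˢ 𝒦) := by
    rw [Filter.le_principal_iff, Filter.mem_map]
    exact Filter.Eventually.of_forall fun n => ⟨hpK n, hpy n⟩
  obtain ⟨q, hqS, hqcl⟩ := hS.exists_clusterPt hle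
  obtain ⟨μ, A⟩ := q
  have hμK : μ ∈ K := hqS.1
  have hA𝒦 : ∃ y, r ≤ infDist y (A : Set X) := hqS.2
  obtain ⟨g, h, hg, hh, hd⟩ := hspread μ hμK A hA𝒦
  set m := min ((μ : Measure (X ≃ᵢ X)) (ball g σ)) ((μ : Measure (X ≃ᵢ X)) (ball h σ)) with hm
  have hm0 : 0 < m :=
    lt_min (hg _ isOpen_ball (mem_ball_self hσ)) (hh _ isOpen_ball (mem_ball_self hσ))
  have hmtop : m ≠ ⊤ :=
    ((min_le_left _ _).trans_lt (measure_lt_top _ _)).ne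
  have hhalf : m/2 < m := ENNReal.half_lt_self hm0.ne' hmtop
  have hU : {q : ProbabilityMeasure (X ≃ᵢ X) × NonemptyCompacts X |
      (m/2 < (q.1 : Measure (X ≃ᵢ X)) (ball g σ) ∧
        m/2 < (q.1 : Measure (X ≃ᵢ X)) (ball h σ)) ∧
      dist q.2 A < δ₀/8} ∈ 𝓝 (μ, A) := by
    rw [nhds_prod_eq]
    have e1 : ∀ᶠ μ' : ProbabilityMeasure (X ≃ᵢ X) in 𝓝 μ,
        m/2 < (μ' : Measure (X ≃ᵢ X)) (ball g σ) :=
      eventually_lt_measure_open isOpen_ball (hhalf.trans_le (min_le_left _ _))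
    have e2 : ∀ᶠ μ' : ProbabilityMeasure (X ≃ᵢ X) in 𝓝 μ,
        m/2 < (μ' : Measure (X ≃ᵢ X)) (ball h σ) :=
      eventually_lt_measure_open isOpen_ball (hhalf.trans_le (min_le_right _ _))
    have e3 : ∀ᶠ B : NonemptyCompacts X in 𝓝 A, dist B A < δ₀/8 := by
      have : ball A (δ₀/8) ∈ 𝓝 A := Metric.ball_mem_nhds A (by positivity)
      exact Filter.eventually_iff_exists_mem.mpr ⟨_, this, fun B hB => mem_ball.mp hB⟩
    exact Filter.prod_mem_prod (e1.and e2) e3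
  obtain ⟨N, hNlt⟩ := ENNReal.exists_inv_nat_lt (a := m/2)
    (by simpa using (ENNReal.half_pos hm0.ne').ne')
  obtain ⟨n, hnN, hnU⟩ := cluster_frequently hqcl hU N
  obtain ⟨⟨hmg, hmh⟩, hdA⟩ := hnU
  -- the inverse bound
  have hinv : ((n : ℝ≥0∞)+1)⁻¹ ≤ (N : ℝ≥0∞)⁻¹ := by
    apply ENNReal.inv_le_inv'
    calc (N : ℝ≥0∞) ≤ (n : ℝ≥0∞) := by exact_mod_cast Nat.cast_le.mpr hnN
      _ ≤ (n : ℝ≥0∞) + 1 := le_self_add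
  have hmass1 : ((n : ℝ≥0∞)+1)⁻¹ ≤ ((p n).1 : Measure (X ≃ᵢ X)) (ball g σ) :=
    (hinv.trans hNlt.le).trans hmg.le
  have hmass2 : ((n : ℝ≥0∞)+1)⁻¹ ≤ ((p n).1 : Measure (X ≃ᵢ X)) (ball h σ) :=
    (hinv.trans hNlt.le).trans hmh.le
  have hmid := hpctr n g h hmass1 hmass2
  -- Hausdorff transfer
  set An : Set X := ((p n).2 : Set X) with hAn
  have hAnne : An.Nonempty := (p n).2.nonempty
  have hAne : (A : Set X).Nonempty := A.nonempty
  have hdAn : hausdorffDist An (A : Set X) < δ₀/8 := by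
    rw [← NonemptyCompacts.dist_eq]; exact hdA
  have htri : hausdorffDist (⇑g '' (A : Set X)) (⇑h '' (A : Set X))
      ≤ hausdorffDist (⇑g '' (A : Set X)) (⇑g '' An)
        + hausdorffDist (⇑g '' An) (⇑h '' An)
        + hausdorffDist (⇑h '' An) (⇑h '' (A : Set X)) := by
    calc hausdorffDist (⇑g '' (A : Set X)) (⇑h '' (A : Set X))
        ≤ hausdorffDist (⇑g '' (A : Set X)) (⇑g '' An)
          + hausdorffDist (⇑g '' An) (⇑h '' (A : Set X)) :=
          hausdorffDist_triangle (hED (hAne.image _) (hAnne.image _))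
      _ ≤ hausdorffDist (⇑g '' (A : Set X)) (⇑g '' An)
          + (hausdorffDist (⇑g '' An) (⇑h '' An)
            + hausdorffDist (⇑h '' An) (⇑h '' (A : Set X))) := by
          have := hausdorffDist_triangle (s := ⇑g '' An) (t := ⇑h '' An)
            (u := ⇑h '' (A : Set X)) (hED (hAnne.image _) (hAnne.image _))
          linarith
      _ = _ := by ring
  have t1 : hausdorffDist (⇑g '' (A : Set X)) (⇑g '' An) < δ₀/8 := by
    rw [hausdorffDist_image g.isometry, hausdorffDist_comm]
    exact hdAn
  have t3 : hausdorffDist (⇑h '' An) (⇑h '' (A : Set X)) < δ₀/8 := by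
    rw [hausdorffDist_image h.isometry]
    exact hdAn
  linarith

end ConvAux
end Chunk7

section Chunk8
open TopologicalSpace
open scoped ENNReal NNReal

namespace ConvAux

variable {X : Type*} [MetricSpace X] [CompactSpace X] [MeasurableSpace X] [BorelSpace X]

lemma actConv_apply (μ : Measure (X ≃ᵢ X)) (ρ : Measure X) [SFinite ρ]
    {E : Set X} (hE : MeasurableSet E) :
    actConv μ ρ E = ∫⁻ g, ρ (⇑g ⁻¹' E) ∂μ := by
  rw [actConv, Measure.map_apply measurable_act hE, Measure.prod_apply (measurable_act hE)]
  rfl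

lemma actConv_prob (μ : Measure (X ≃ᵢ X)) [IsProbabilityMeasure μ] (ρ : Measure X)
    [IsProbabilityMeasure ρ] : IsProbabilityMeasure (actConv μ ρ) := by
  rw [actConv]
  exact Measure.isProbabilityMeasure_map measurable_act.aemeasurable

lemma convSeq_prob (μs : ℕ → Measure (X ≃ᵢ X)) (hμs : ∀ n, IsProbabilityMeasure (μs n))
    (ν : Measure X) [IsProbabilityMeasure ν] :
    ∀ m, IsProbabilityMeasure (convSeq μs ν m)
  | 0 => by rw [convSeq]; infer_instance
  | (m+1) => by
      rw [convSeq]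
      haveI := convSeq_prob μs hμs ν m
      haveI := hμs m
      exact actConv_prob _ _

lemma transport (μ : Measure (X ≃ᵢ X)) (ρ : Measure X) [SFinite ρ] {E : Set X}
    (hE : MeasurableSet E) {W : Set (X ≃ᵢ X)} (hW : MeasurableSet W) {c : ℝ≥0∞}
    (hall : ∀ g ∈ W, c ≤ ρ (⇑g ⁻¹' E)) : c * μ W ≤ actConv μ ρ E := by
  rw [actConv_apply μ ρ hE]
  have hmono : ∀ g, W.indicator (fun _ => c) g ≤ ρ (⇑g ⁻¹' E) := by
    intro g
    by_cases hg : g ∈ W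
    · rw [indicator_of_mem hg]; exact hall g hg
    · rw [indicator_of_notMem hg]; exact (by positivity)
  calc c * μ W = ∫⁻ g, W.indicator (fun _ => c) g ∂μ :=
        (lintegral_indicator_const hW c).symm
    _ ≤ ∫⁻ g, ρ (⇑g ⁻¹' E) ∂μ := lintegral_mono hmono

lemma step_mass (μ : Measure (X ≃ᵢ X)) (ρ : Measure X) [SFinite ρ] {g : X ≃ᵢ X}
    {σ τ : ℝ} {a : X} {c : ℝ≥0∞} (hc : c ≤ ρ (closedBall a τ)) {β : ℝ≥0∞}
    (hβ : β ≤ μ (ball g σ)) :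
    c * β ≤ actConv μ ρ (closedBall (g a) (τ + σ)) := by
  have htrans : ∀ g' ∈ ball g σ, c ≤ ρ (⇑g' ⁻¹' closedBall (g a) (τ + σ)) := by
    intro g' hg'
    refine hc.trans (measure_mono ?_)
    intro x hx
    simp only [mem_closedBall] at hx
    simp only [mem_preimage, mem_closedBall]
    have h1 : dist (g' x) (g a) ≤ dist (g' x) (g x) + dist (g x) (g a) := dist_triangle _ _ _
    have h2 : dist (g' x) (g x) ≤ dist g' g := dist_apply_le g' g x
    have h3 : dist (g x) (g a) = dist x a := g.isometry.dist_eq x a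
    have h4 : dist g' g < σ := mem_ball.mp hg'
    linarith
  calc c * β ≤ c * μ (ball g σ) := mul_le_mul_right hβ c
    _ ≤ actConv μ ρ (closedBall (g a) (τ + σ)) :=
        transport μ ρ measurableSet_closedBall measurableSet_ball htrans

lemma le_infDist_of_forall {A : Set X} (hA : A.Nonempty) {y : X} {r : ℝ}
    (h : ∀ a ∈ A, r ≤ dist y a) : r ≤ infDist y A := by
  by_contra hlt
  obtain ⟨a, haA, hd⟩ := (infDist_lt_iff hA).mp (not_le.mp hlt)
  exact absurd hd (not_lt.mpr (h a haA))

end ConvAux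
end Chunk8

/-- **Lemma.** For a weak-* compact set `K` of probability measures on the isometry group,
all satisfying the no-deterministic-images condition, and any `ε > 0`, there are `m ∈ ℕ`
and `δ > 0` such that for all `μ₁, …, μₘ ∈ K`, every starting probability measure `ν` and
every `ε`-wide Borel set `Q`, `[μₘ * ⋯ * μ₁ * ν](Q) ≥ δ`. -/
theorem conv_mass_on_wide_sets [MeasurableSpace X] [BorelSpace X]
    (K : Set (ProbabilityMeasure (X ≃ᵢ X))) (hK : IsCompact K)
    (hKnd : ∀ μ ∈ K, NoDetImages (μ : Measure (X ≃ᵢ X))) :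
    ∀ ε : ℝ, 0 < ε → ∃ M : ℕ, ∃ δ : ℝ, 0 < δ ∧
      ∀ μs : ℕ → ProbabilityMeasure (X ≃ᵢ X), (∀ n, μs n ∈ K) →
        ∀ ν : Measure X, IsProbabilityMeasure ν →
          ∀ Q : Set X, MeasurableSet Q → EpsWide ε Q →
            ENNReal.ofReal δ ≤ convSeq (fun k => (μs k : Measure (X ≃ᵢ X))) ν M Q := by
  intro ε hε
  classical
  have hr : (0:ℝ) < ε/6 := by positivity
  obtain ⟨δ₀, hδ₀, hspread⟩ := ConvAux.lemA K hK hKnd hr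
  obtain ⟨TX, hTXfin, hTXcov⟩ := (Metric.totallyBounded_iff.mp
    (isCompact_univ (X := X)).totallyBounded) (δ₀/8) (by positivity)
  set M : ℕ := hTXfin.toFinset.card with hM_def
  have hσpos : (0:ℝ) < ε/(12*(M+2)) := by positivity
  obtain ⟨β, hβ0, hspreadQ⟩ := ConvAux.lemB (X := X) K hK (r := ε/6) (σ := ε/(12*((M:ℝ)+2))) (δ₀ := δ₀) hr hσpos hδ₀ hspread
  set σ : ℝ := ε/(12*(M+2)) with hσ_def
  obtain ⟨TG, hTGfin, hTGcov⟩ := ConvAux.exists_finite_ball_cover (X := X) σ hσpos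
  set β₁ : ℝ≥0∞ := ((hTGfin.toFinset.card : ℝ≥0∞)+1)⁻¹ with hβ₁_def
  obtain ⟨TX0, hTX0fin, hTX0cov⟩ := (Metric.totallyBounded_iff.mp
    (isCompact_univ (X := X)).totallyBounded) σ hσpos
  set c₀ : ℝ≥0∞ := ((hTX0fin.toFinset.card : ℝ≥0∞)+1)⁻¹ with hc₀_def
  set β₂ : ℝ≥0∞ := min β β₁ with hβ₂_def
  have hβ₁0 : 0 < β₁ := ENNReal.inv_pos.mpr (by simp)
  have hβ₂0 : 0 < β₂ := lt_min hβ0 hβ₁0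
  have hc₀0 : 0 < c₀ := ENNReal.inv_pos.mpr (by simp)
  have hβ₂top : β₂ ≠ ⊤ := ((min_le_right β β₁).trans_lt
    (ENNReal.inv_lt_top.mpr (by simp))).ne
  have hc₀top : c₀ ≠ ⊤ := by
    simp only [hc₀_def, Ne, ENNReal.inv_eq_top]
    simp
  set b : ℝ≥0∞ := c₀ * β₂ ^ M with hb_def
  have hb0 : 0 < b := ENNReal.mul_pos hc₀0.ne' (pow_ne_zero M hβ₂0.ne')
  have hbtop : b ≠ ⊤ := ENNReal.mul_ne_top hc₀top (ENNReal.pow_ne_top hβ₂top)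
  have hbr : 0 < b.toReal := ENNReal.toReal_pos hb0.ne' hbtop
  refine ⟨M, b.toReal/2, by linarith, ?_⟩
  intro μs hμsK ν hν Q hQmeas hQwide
  haveI := hν
  set ρ : ℕ → Measure X := convSeq (fun k => (μs k : Measure (X ≃ᵢ X))) ν with hρ_def
  have hρprob : ∀ m, IsProbabilityMeasure (ρ m) :=
    ConvAux.convSeq_prob _ (fun n => (μs n).prop) ν
  have hinv : ∀ m : ℕ, ∃ A : Set X, A.Nonempty ∧ IsCompact A ∧
      (∀ a ∈ A, c₀ * β₂ ^ m ≤ ρ m (closedBall a (σ*(m+1)))) ∧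
      ((∀ y : X, ∃ a ∈ A, dist y a < ε/6) ∨
        ∃ F : Finset X, ↑F ⊆ A ∧ (∀ p ∈ F, ∀ q ∈ F, p ≠ q → δ₀/4 ≤ dist p q)
          ∧ m + 1 ≤ F.card) := by
    intro m
    induction m with
    | zero =>
      have hcov : (univ : Set X) ⊆ ⋃ i ∈ hTX0fin.toFinset, ball i σ := by
        intro x hx
        have hxc := hTX0cov hx
        simp only [mem_iUnion, exists_prop] at hxc ⊢
        obtain ⟨c, hc, hxc⟩ := hxc
        exact ⟨c, hTX0fin.mem_toFinset.mpr hc, hxc⟩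
      obtain ⟨x₀, hx₀T, hx₀m⟩ := ConvAux.pigeonhole_measure ν hTX0fin.toFinset
        (fun c => ball c σ) hcov
      refine ⟨{x₀}, singleton_nonempty _, isCompact_singleton, ?_,
        Or.inr ⟨{x₀}, by simp, ?_, by simp⟩⟩
      · intro a ha
        rw [mem_singleton_iff] at ha
        subst ha
        have h0 : ρ 0 = ν := rfl
        rw [h0, pow_zero, mul_one]
        refine le_trans hx₀m (measure_mono ?_)
        intro z hz
        rw [mem_closedBall]
        have hz' := mem_ball.mp hz
        push_cast
        linarith
      · intro p hp q hq hpq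
        simp only [Finset.mem_singleton] at hp hq
        exact absurd (hp.trans hq.symm) hpq
    | succ m ih =>
      obtain ⟨A, hAne, hAcpt, hmass, hdisj⟩ := ih
      haveI : IsProbabilityMeasure ((μs m : Measure (X ≃ᵢ X))) := (μs m).prop
      haveI : IsProbabilityMeasure (ρ m) := hρprob m
      have hρsucc : ρ (m+1) = actConv (μs m : Measure (X ≃ᵢ X)) (ρ m) := rfl
      have hnew : ∀ g : X ≃ᵢ X, β₂ ≤ (μs m : Measure (X ≃ᵢ X)) (ball g σ) →
          ∀ a ∈ A, c₀ * β₂^(m+1) ≤ ρ (m+1) (closedBall (g a) (σ*(↑(m+1)+1))) := by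
        intro g hg a ha
        have hsm := ConvAux.step_mass (μs m : Measure (X ≃ᵢ X)) (ρ m)
          (hmass a ha) hg
        have hrad : σ*((m:ℝ)+1) + σ = σ*((↑(m+1):ℝ)+1) := by push_cast; ring
        rw [hrad] at hsm
        rw [hρsucc]
        calc c₀ * β₂^(m+1) = (c₀ * β₂^m) * β₂ := by rw [pow_succ, mul_assoc]
          _ ≤ _ := hsm
      by_cases hdense : ∀ y : X, ∃ a ∈ A, dist y a < ε/6
      · -- dense case : push forward by one heavy isometry
        have hcovG : (univ : Set (X ≃ᵢ X)) ⊆ ⋃ i ∈ hTGfin.toFinset, ball i σ := by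
          intro x hx
          have hxc := hTGcov hx
          simp only [mem_iUnion, exists_prop] at hxc ⊢
          obtain ⟨c, hc, hxc⟩ := hxc
          exact ⟨c, hTGfin.mem_toFinset.mpr hc, hxc⟩
        obtain ⟨g, hgT, hgmass⟩ := ConvAux.pigeonhole_measure
          (μs m : Measure (X ≃ᵢ X)) hTGfin.toFinset (fun c => ball c σ) hcovG
        refine ⟨⇑g '' A, hAne.image _, hAcpt.image g.continuous, ?_, Or.inl ?_⟩
        · rintro b ⟨a, ha, rfl⟩
          exact hnew g ((min_le_right β β₁).trans hgmass) a ha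
        · intro y
          obtain ⟨a, ha, hda⟩ := hdense (g.symm y)
          refine ⟨g a, mem_image_of_mem _ ha, ?_⟩
          have hdy : dist y (g a) = dist (g.symm y) a := by
            conv_lhs => rw [← g.apply_symm_apply y]
            exact g.isometry.dist_eq _ _
          rw [hdy]
          exact hda
      · -- spread case
        have hF := hdisj.resolve_left hdense
        obtain ⟨F, hFsub, hFsep, hFcard⟩ := hF
        have hy : ∃ y, ε/6 ≤ infDist y A := by
          push_neg at hdense
          obtain ⟨y, hy⟩ := hdense
          exact ⟨y, ConvAux.le_infDist_of_forall hAne (fun a ha => hy a ha)⟩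
        obtain ⟨g, h, hgm, hhm, hdgh⟩ := hspreadQ (μs m) (hμsK m) ⟨⟨A, hAcpt⟩, hAne⟩ hy
        have hbuild : ∀ g h : X ≃ᵢ X,
            β ≤ (μs m : Measure (X ≃ᵢ X)) (ball g σ) →
            β ≤ (μs m : Measure (X ≃ᵢ X)) (ball h σ) →
            (∃ a ∈ A, δ₀/2/2 ≤ infDist (g a) (⇑h '' A)) →
            ∃ A' : Set X, A'.Nonempty ∧ IsCompact A' ∧
              (∀ a ∈ A', c₀ * β₂ ^ (m+1) ≤ ρ (m+1) (closedBall a (σ*(↑(m+1)+1)))) ∧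
              ((∀ y : X, ∃ a ∈ A', dist y a < ε/6) ∨
                ∃ F' : Finset X, ↑F' ⊆ A' ∧
                  (∀ p ∈ F', ∀ q ∈ F', p ≠ q → δ₀/4 ≤ dist p q) ∧ (m+1) + 1 ≤ F'.card) := by
          rintro g h hgm hhm ⟨a₀, ha₀, hfar⟩
          have hβ₂g : β₂ ≤ (μs m : Measure (X ≃ᵢ X)) (ball g σ) :=
            (min_le_left β β₁).trans hgm
          have hβ₂h : β₂ ≤ (μs m : Measure (X ≃ᵢ X)) (ball h σ) :=
            (min_le_left β β₁).trans hhm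
          have hnotmem : g a₀ ∉ F.image h := by
            intro hmem
            obtain ⟨q₀, hq₀F, hq₀⟩ := Finset.mem_image.mp hmem
            have hq₀A : h q₀ ∈ ⇑h '' A := mem_image_of_mem _ (hFsub hq₀F)
            have h1 : infDist (g a₀) (⇑h '' A) ≤ dist (g a₀) (h q₀) :=
              infDist_le_dist_of_mem hq₀A
            rw [hq₀, dist_self] at h1
            linarith
          refine ⟨(⇑h '' A) ∪ {g a₀}, (hAne.image _).inl, 
            (hAcpt.image h.continuous).union isCompact_singleton, ?_, Or.inr ?_⟩
          · rintro b hb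
            rcases hb with ⟨a, ha, rfl⟩ | hb
            · exact hnew h hβ₂h a ha
            · rw [mem_singleton_iff] at hb
              subst hb
              exact hnew g hβ₂g a₀ ha₀
          · refine ⟨insert (g a₀) (F.image h), ?_, ?_, ?_⟩
            · intro p hp
              rw [Finset.coe_insert, Set.mem_insert_iff] at hp
              rcases hp with rfl | hp
              · exact Or.inr rfl
              · rw [Finset.coe_image] at hp
                obtain ⟨q₀, hq₀, rfl⟩ := hp
                exact Or.inl (mem_image_of_mem _ (hFsub hq₀))
            · intro p hp q hq hpq
              rw [Finset.mem_insert] at hp hq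
              rcases hp with rfl | hp
              · rcases hq with rfl | hq
                · exact absurd rfl hpq
                · obtain ⟨q₀, hq₀F, rfl⟩ := Finset.mem_image.mp hq
                  have h1 : infDist (g a₀) (⇑h '' A) ≤ dist (g a₀) (h q₀) :=
                    infDist_le_dist_of_mem (mem_image_of_mem _ (hFsub hq₀F))
                  linarith
              · rcases hq with rfl | hq
                · obtain ⟨p₀, hp₀F, rfl⟩ := Finset.mem_image.mp hp
                  have h1 : infDist (g a₀) (⇑h '' A) ≤ dist (g a₀) (h p₀) :=
                    infDist_le_dist_of_mem (mem_image_of_mem _ (hFsub hp₀F))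
                  rw [dist_comm]
                  linarith
                · obtain ⟨p₀, hp₀F, rfl⟩ := Finset.mem_image.mp hp
                  obtain ⟨q₀, hq₀F, rfl⟩ := Finset.mem_image.mp hq
                  rw [h.isometry.dist_eq]
                  exact hFsep p₀ hp₀F q₀ hq₀F
                    (fun hc => hpq (by rw [hc]))
            · rw [Finset.card_insert_of_notMem hnotmem,
                Finset.card_image_of_injective F h.injective]
              omega
        rcases ConvAux.far_point (by positivity) hdgh with hfp | hfp
        · exact hbuild g h hgm hhm hfp
        · exact hbuild h g hhm hgm hfp
  -- conclusion
  obtain ⟨A, hAne, hAcpt, hmass, hdisj⟩ := hinv M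
  have hdense : ∀ y : X, ∃ a ∈ A, dist y a < ε/6 := by
    rcases hdisj with hd | ⟨F, hFsub, hFsep, hFcard⟩
    · exact hd
    · exfalso
      have hsep2 : ∀ p ∈ F, ∀ q ∈ F, p ≠ q → 2*(δ₀/8) ≤ dist p q := by
        intro p hp q hq hpq
        have := hFsep p hp q hq hpq
        linarith
      have hcard := ConvAux.sep_card_bound hTXfin hTXcov F hsep2
      omega
  obtain ⟨-, y, hyQ⟩ := hQwide
  obtain ⟨a, haA, hay⟩ := hdense y
  have hστ : σ * ((M:ℝ)+1) ≤ ε/12 := by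
    rw [hσ_def, div_mul_eq_mul_div, div_le_div_iff₀ (by positivity) (by norm_num)]
    have hM0 : (0:ℝ) ≤ (M:ℝ) := Nat.cast_nonneg M
    nlinarith
  have hsub : closedBall a (σ*((M:ℝ)+1)) ⊆ Q := by
    intro z hz
    apply hyQ
    rw [mem_ball]
    have h1 : dist z a ≤ σ*((M:ℝ)+1) := mem_closedBall.mp hz
    have h2 : dist z y ≤ dist z a + dist a y := dist_triangle _ _ _
    have h3 : dist a y < ε/6 := by rw [dist_comm]; exact hay
    linarith
  have hQm : b ≤ ρ M Q := le_trans (hmass a haA) (measure_mono hsub)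
  calc ENNReal.ofReal (b.toReal/2) ≤ ENNReal.ofReal (b.toReal) :=
        ENNReal.ofReal_le_ofReal (by linarith)
    _ = b := ENNReal.ofReal_toReal hbtop
    _ ≤ ρ M Q := hQm
end

section
/- Let μ be a Borel probability measure on G, let A ⊆ X be closed, and let C ⊆ X be a compact set disjoint from T_μ(A). Then there exists δ > 0 such that for every Borel probability measure μ̃ on G and every closed set Ã ⊆ X, if W(μ, μ̃) < δ and dist_ℋ(A, Ã) < δ, then C ∩ T_{μ̃}(Ã) = ∅. -/
open MeasureTheory Topology Filter Metric Set

variable {X : Type*} [MetricSpace X] [CompactSpace X]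

instance : SecondCountableTopology (X ≃ᵢ X) := by
  have h : Isometry (fun g : X ≃ᵢ X => (⟨g, g.continuous⟩ : C(X, X))) := fun g h => rfl
  exact h.isEmbedding.secondCountableTopology

/-- In a second countable space, a positive-measure open set meets the support. -/
theorem exists_mem_msupp {α : Type*} [TopologicalSpace α] [SecondCountableTopology α]
    [MeasurableSpace α] (μ : Measure α) {U : Set α} (hU : IsOpen U) (hμU : 0 < μ U) :
    ∃ x ∈ U, x ∈ msupp μ := by
  by_contra h
  push_neg at h
  have key : ∀ x ∈ U, ∃ W, IsOpen W ∧ x ∈ W ∧ μ W = 0 := by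
    intro x hx
    have := h x hx
    simp only [msupp, mem_setOf_eq] at this
    push_neg at this
    obtain ⟨W, hWo, hxW, hW0⟩ := this
    exact ⟨W, hWo, hxW, le_antisymm hW0 zero_le⟩
  choose V hVo hxV hV0 using key
  obtain ⟨T, hTc, hT⟩ := TopologicalSpace.isOpen_iUnion_countable
    (fun x : U => V x x.2) (fun x => hVo x x.2)
  have hUsub : U ⊆ ⋃ i ∈ T, V i i.2 := by
    rw [hT]
    intro x hx
    exact mem_iUnion.2 ⟨⟨x, hx⟩, hxV x hx⟩
  have : μ U = 0 := measure_mono_null hUsub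
    ((measure_biUnion_null_iff hTc).2 fun i _ => hV0 i i.2)
  exact hμU.ne' this

/-- The Wasserstein distance between two measures: the infimum of `∫∫ d(x,y) dγ`
over all couplings `γ` (measures on the square with the given marginals). -/
noncomputable def wassDist {α : Type*} [MeasurableSpace α] [PseudoEMetricSpace α]
    (μ ν : Measure α) : ENNReal :=
  ⨅ γ ∈ {γ : Measure (α × α) | γ.map Prod.fst = μ ∧ γ.map Prod.snd = ν},
    ∫⁻ p, edist p.1 p.2 ∂γ


theorem wass_transfer {α : Type*} [MeasurableSpace α] [MetricSpace α] [OpensMeasurableSpace α]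
    [SecondCountableTopology α]
    (μ μ' : Measure α) (g₀ : α) (s : ℝ) (hs : 0 < s)
    (hW : wassDist μ μ' < μ (ball g₀ s) * ENNReal.ofReal s) :
    0 < μ' (ball g₀ (2 * s)) := by
  rw [wassDist] at hW
  simp only [iInf_lt_iff, mem_setOf_eq] at hW
  obtain ⟨γ, ⟨hfst, hsnd⟩, hγ⟩ := hW
  set p := μ (ball g₀ s) with hp
  have hmeas : AEMeasurable (fun q : α × α => edist q.1 q.2) γ :=
    continuous_edist.measurable.aemeasurable
  have hmark : ENNReal.ofReal s * γ {q : α × α | ENNReal.ofReal s ≤ edist q.1 q.2} ≤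
      ∫⁻ q, edist q.1 q.2 ∂γ := mul_meas_ge_le_lintegral₀ hmeas _
  have hE : γ {q : α × α | ENNReal.ofReal s ≤ edist q.1 q.2} < p := by
    by_contra hcon
    push_neg at hcon
    have : p * ENNReal.ofReal s ≤ ∫⁻ q, edist q.1 q.2 ∂γ := by
      calc p * ENNReal.ofReal s = ENNReal.ofReal s * p := mul_comm _ _
      _ ≤ ENNReal.ofReal s * γ {q : α × α | ENNReal.ofReal s ≤ edist q.1 q.2} :=
          mul_le_mul_right hcon _
      _ ≤ _ := hmark
    exact absurd (lt_of_le_of_lt this hγ) (lt_irrefl _)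
  have hball : γ (Prod.fst ⁻¹' ball g₀ s) = p := by
    rw [hp, ← hfst, Measure.map_apply measurable_fst measurableSet_ball]
  have hsub : (Prod.fst ⁻¹' ball g₀ s) ⊆
      {q : α × α | ENNReal.ofReal s ≤ edist q.1 q.2} ∪ (Prod.snd ⁻¹' ball g₀ (2 * s)) := by
    rintro ⟨a, b⟩ hab
    by_cases hd : ENNReal.ofReal s ≤ edist a b
    · exact Or.inl hd
    · right
      push_neg at hd
      have hdab : dist a b < s := by
        rw [edist_dist] at hd
        exact (ENNReal.ofReal_lt_ofReal_iff hs).1 hd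
      simp only [mem_preimage, mem_ball] at hab ⊢
      calc dist b g₀ ≤ dist b a + dist a g₀ := dist_triangle _ _ _
        _ < s + s := by rw [dist_comm b a]; exact add_lt_add hdab hab
        _ = 2 * s := by ring
  have hsnd' : μ' (ball g₀ (2 * s)) = γ (Prod.snd ⁻¹' ball g₀ (2 * s)) := by
    rw [← hsnd, Measure.map_apply measurable_snd measurableSet_ball]
  rw [hsnd']
  by_contra hz
  push_neg at hz
  have hz0 : γ (Prod.snd ⁻¹' ball g₀ (2 * s)) = 0 := le_antisymm hz zero_le
  have : p ≤ γ {q : α × α | ENNReal.ofReal s ≤ edist q.1 q.2} := by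
    calc p = γ (Prod.fst ⁻¹' ball g₀ s) := hball.symm
      _ ≤ γ ({q : α × α | ENNReal.ofReal s ≤ edist q.1 q.2} ∪ (Prod.snd ⁻¹' ball g₀ (2 * s))) :=
          measure_mono hsub
      _ ≤ _ + γ (Prod.snd ⁻¹' ball g₀ (2 * s)) := measure_union_le _ _
      _ = _ := by rw [hz0, add_zero]
  exact absurd (lt_of_le_of_lt this hE) (lt_irrefl _)

/-- `T_μ(A) = ⋂_{g ∈ supp μ} g(A)`. -/
def Tmap (μ : Measure (X ≃ᵢ X)) (A : Set X) : Set X :=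
  ⋂ g ∈ msupp μ, g '' A

/-- **Lemma.** Let `μ` be a Borel probability measure on the isometry group of `X`, `A ⊆ X`
closed, and `C ⊆ X` compact and disjoint from `T_μ(A)`. Then there is `δ > 0` such that for
every probability measure `μ̃` and closed set `Ã` with `W(μ, μ̃) < δ` and
`dist_ℋ(A, Ã) < δ`, one has `C ∩ T_{μ̃}(Ã) = ∅`. -/
theorem compact_disjoint_Tmap_stable [MeasurableSpace X] [BorelSpace X]
    (μ : Measure (X ≃ᵢ X)) [IsProbabilityMeasure μ]
    (A : Set X) (hA : IsClosed A)
    (C : Set X) (hC : IsCompact C) (hdisj : C ∩ Tmap μ A = ∅) :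
    ∃ δ : ℝ, 0 < δ ∧
      ∀ (μ' : Measure (X ≃ᵢ X)), IsProbabilityMeasure μ' →
        ∀ A' : Set X, IsClosed A' →
          wassDist μ μ' < ENNReal.ofReal δ →
            EMetric.hausdorffEdist A A' < ENNReal.ofReal δ →
              C ∩ Tmap μ' A' = ∅ := by
  rcases C.eq_empty_or_nonempty with hCe | hCne
  · exact ⟨1, one_pos, fun μ' _ A' _ _ _ => by simp [hCe]⟩
  rcases A.eq_empty_or_nonempty with hAe | hAne
  · -- A is empty
    subst hAe
    obtain ⟨x, hx⟩ := hCne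
    have hxT : x ∉ Tmap μ (∅ : Set X) := fun h =>
      (eq_empty_iff_forall_notMem.1 hdisj x ⟨hx, h⟩)
    simp only [Tmap, mem_iInter] at hxT
    push_neg at hxT
    obtain ⟨g₀, hg₀, -⟩ := hxT
    have hp : 0 < μ (ball g₀ 1) := hg₀ _ isOpen_ball (mem_ball_self one_pos)
    refine ⟨(μ (ball g₀ 1)).toReal, ENNReal.toReal_pos hp.ne' (measure_ne_top μ _),
      fun μ' _ A' hA' hWd hHd => ?_⟩
    have hA'e : A' = ∅ := by
      by_contra h
      have hA'ne : A'.Nonempty := nonempty_iff_ne_empty.2 h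
      have : EMetric.hausdorffEdist (∅ : Set X) A' = ⊤ := by
        rw [EMetric.hausdorffEdist, Metric.hausdorffEDist_comm]
        exact EMetric.hausdorffEdist_empty hA'ne
      rw [this] at hHd
      exact absurd hHd (by simp)
    subst hA'e
    have hWd' : wassDist μ μ' < μ (ball g₀ 1) * ENNReal.ofReal 1 := by
      refine lt_of_lt_of_le hWd ?_
      rw [ENNReal.ofReal_one, mul_one, ENNReal.ofReal_toReal (measure_ne_top μ _)]
    have hpos := wass_transfer μ μ' g₀ 1 one_pos hWd'
    obtain ⟨g', -, hg'⟩ := exists_mem_msupp μ' isOpen_ball hpos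
    have : Tmap μ' (∅ : Set X) ⊆ (∅ : Set X) := by
      intro y hy
      have := (mem_iInter₂.1 hy) g' hg'
      simpa using this
    rw [eq_empty_iff_forall_notMem]
    rintro y ⟨-, hy2⟩
    exact this hy2
  · -- A is nonempty
    have key : ∀ x : X, ∃ gx : X ≃ᵢ X, x ∈ C →
        gx ∈ msupp μ ∧ 0 < infDist x (gx '' A) := by
      intro x
      by_cases hx : x ∈ C
      · have hxT : x ∉ Tmap μ A := fun h =>
          (eq_empty_iff_forall_notMem.1 hdisj x ⟨hx, h⟩)
        simp only [Tmap, mem_iInter] at hxT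
        push_neg at hxT
        obtain ⟨gx, hgx, hxim⟩ := hxT
        refine ⟨gx, fun _ => ⟨hgx, ?_⟩⟩
        have hcl : IsClosed (gx '' A) :=
          ((hA.isCompact).image gx.continuous).isClosed
        exact (hcl.notMem_iff_infDist_pos (hAne.image gx)).1 hxim
      · exact ⟨IsometryEquiv.refl X, fun h => absurd h hx⟩
    choose g hg using key
    set r : X → ℝ := fun x => infDist x (g x '' A) with hr_def
    have hcover : C ⊆ ⋃ x ∈ C, ball x (r x / 4) := by
      intro x hx
      exact mem_biUnion hx (mem_ball_self (by have := (hg x hx).2; positivity))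
    obtain ⟨t, hts, htfin, htcov⟩ :=
      hC.elim_finite_subcover_image (fun x _ => isOpen_ball) hcover
    have htne : t.Nonempty := by
      obtain ⟨x, hx⟩ := hCne
      obtain ⟨i, hi, -⟩ := mem_iUnion₂.1 (htcov hx)
      exact ⟨i, hi⟩
    set s : Finset X := htfin.toFinset with hs_def
    have hsne : s.Nonempty := by
      obtain ⟨i, hi⟩ := htne
      exact ⟨i, htfin.mem_toFinset.2 hi⟩
    set f : X → ℝ := fun x =>
      min (r x / 4) (r x / 8 * (μ (ball (g x) (r x / 8))).toReal) with hf_def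
    refine ⟨s.inf' hsne f, ?_, fun μ' hμ' A' hA' hWd hHd => ?_⟩
    · rw [Finset.lt_inf'_iff]
      intro i hi
      have hiC : i ∈ C := hts (htfin.mem_toFinset.1 hi)
      obtain ⟨hgi, hri⟩ := hg i hiC
      have hball : 0 < μ (ball (g i) (r i / 8)) :=
        hgi _ isOpen_ball (mem_ball_self (by positivity))
      have h2 : 0 < (μ (ball (g i) (r i / 8))).toReal :=
        ENNReal.toReal_pos hball.ne' (measure_ne_top μ _)
      exact lt_min (by positivity) (by positivity)
    · rw [eq_empty_iff_forall_notMem]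
      rintro y ⟨hyC, hyT⟩
      obtain ⟨i, hit, hyball⟩ := mem_iUnion₂.1 (htcov hyC)
      have his : i ∈ s := htfin.mem_toFinset.2 hit
      have hiC : i ∈ C := hts hit
      obtain ⟨hgi, hri⟩ := hg i hiC
      have hδle : s.inf' hsne f ≤ f i := Finset.inf'_le f his
      have hδ1 : s.inf' hsne f ≤ r i / 4 := hδle.trans (min_le_left _ _)
      have hδ2 : s.inf' hsne f ≤ r i / 8 * (μ (ball (g i) (r i / 8))).toReal :=
        hδle.trans (min_le_right _ _)
      -- transfer the Wasserstein bound
      have hWd' : wassDist μ μ' < μ (ball (g i) (r i / 8)) * ENNReal.ofReal (r i / 8) := by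
        refine lt_of_lt_of_le hWd ?_
        calc ENNReal.ofReal (s.inf' hsne f)
            ≤ ENNReal.ofReal (r i / 8 * (μ (ball (g i) (r i / 8))).toReal) :=
              ENNReal.ofReal_le_ofReal hδ2
          _ = ENNReal.ofReal (r i / 8) * ENNReal.ofReal ((μ (ball (g i) (r i / 8))).toReal) :=
              ENNReal.ofReal_mul (by positivity)
          _ = ENNReal.ofReal (r i / 8) * μ (ball (g i) (r i / 8)) := by
              rw [ENNReal.ofReal_toReal (measure_ne_top μ _)]
          _ = _ := mul_comm _ _
      have hpos := wass_transfer μ μ' (g i) (r i / 8) (by positivity) hWd'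
      obtain ⟨g', hg'ball, hg'supp⟩ := exists_mem_msupp μ' isOpen_ball hpos
      have hyg' : y ∈ g' '' A' := (mem_iInter₂.1 hyT) g' hg'supp
      obtain ⟨a', ha', hya'⟩ := hyg'
      -- find a point of A close to a'
      have hHd' : EMetric.hausdorffEdist A' A < ENNReal.ofReal (r i / 4) := by
        rw [EMetric.hausdorffEdist, Metric.hausdorffEDist_comm]
        exact lt_of_lt_of_le hHd (ENNReal.ofReal_le_ofReal hδ1)
      obtain ⟨a, haA, hd⟩ := EMetric.exists_edist_lt_of_hausdorffEdist_lt ha' hHd'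
      have hdaa' : dist a' a < r i / 4 := by
        rw [edist_dist] at hd
        exact (ENNReal.ofReal_lt_ofReal_iff (by positivity)).1 hd
      have hgg : dist g' (g i) < r i / 4 := by
        have := mem_ball.1 hg'ball
        linarith
      have happ : dist (g' a') ((g i) a') ≤ dist g' (g i) :=
        ContinuousMap.dist_apply_le_dist (f := (⟨g', g'.continuous⟩ : C(X, X)))
          (g := (⟨g i, (g i).continuous⟩ : C(X, X))) a'
      have h1 : dist y ((g i) a) < r i / 2 := by
        have h3 : dist ((g i) a') ((g i) a) = dist a' a := (g i).isometry.dist_eq a' a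
        calc dist y ((g i) a) ≤ dist y ((g i) a') + dist ((g i) a') ((g i) a) :=
              dist_triangle _ _ _
          _ = dist (g' a') ((g i) a') + dist a' a := by rw [← hya', h3]
          _ < r i / 4 + r i / 4 := add_lt_add (lt_of_le_of_lt happ hgg) hdaa'
          _ = r i / 2 := by ring
      have h2 : dist i ((g i) a) < 3 * r i / 4 := by
        calc dist i ((g i) a) ≤ dist i y + dist y ((g i) a) := dist_triangle _ _ _
          _ < r i / 4 + r i / 2 := add_lt_add (by rw [dist_comm]; exact mem_ball.1 hyball) h1
          _ = 3 * r i / 4 := by ring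
      have h4 : r i ≤ dist i ((g i) a) :=
        infDist_le_dist_of_mem (mem_image_of_mem _ haA)
      linarith
end
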